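/- arXiv:2309.02747 — 4 statements merged into one kernel-verified Lean document; each statement's English description precedes it below -/
import Mathlib

section
/- Reversible one-way deterministic finite automata are computationally weaker than one-way deterministic finite automata; in particular, there exists a regular language not accepted by any reversible one-way deterministic finite automaton. -/
namespace WK

/-- Tape symbols: input symbols plus the two endmarkers.
`Sum.inr false` is the left endmarker, `Sum.inr true` the right endmarker. -/
abbrev TSym (α : Type) : Type := α ⊕ Bool

/-- The tape for input `w`: left endmarker, the symbols of `w`, right endmarker. -/
def tape {α : Type} (w : List α) (k : ℕ) : TSym α :=
  ((Sum.inr false :: w.map Sum.inl) ++ [Sum.inr true]).getD k (Sum.inr true)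

/-- A deterministic two-party Watson-Crick system: two finite automata (the upper
component `1` and the lower component `2`) with a finite set `M` of messages,
partial transition functions `δᵢ` (depending on state, scanned symbol and received
message, `none` = no message) and broadcast functions `μᵢ`. -/
structure DPWK (α : Type) where
  M : Type
  Q1 : Type
  Q2 : Type
  fM : Fintype M
  fQ1 : Fintype Q1
  fQ2 : Fintype Q2
  δ1 : Q1 → TSym α → Option M → Option (Q1 × Bool)
  δ2 : Q2 → TSym α → Option M → Option (Q2 × Bool)
  μ1 : Q1 → TSym α → Option M
  μ2 : Q2 → TSym α → Option M
  q01 : Q1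
  q02 : Q2
  F1 : Set Q1
  F2 : Set Q2

/-- A configuration: states and head positions of the two components. -/
structure Config {α : Type} (A : DPWK α) where
  p : A.Q1
  i : ℕ
  q : A.Q2
  j : ℕ

/-- One synchronous (forward) computation step: each component reads its symbol,
receives the message broadcast by the other component, changes its state and
optionally moves (the upper head to the right, the lower head to the left). -/
def Step {α : Type} (A : DPWK α) (w : List α) (c c' : Config A) : Prop :=
  ∃ d1 d2 : Bool,
    A.δ1 c.p (tape w c.i) (A.μ2 c.q (tape w c.j)) = some (c'.p, d1) ∧
    A.δ2 c.q (tape w c.j) (A.μ1 c.p (tape w c.i)) = some (c'.q, d2) ∧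
    c'.i = c.i + (cond d1 1 0) ∧ c.j = c'.j + (cond d2 1 0)

/-- The initial configuration on input `w`: the upper component on the left
endmarker, the lower component on the right endmarker. -/
def initConf {α : Type} (A : DPWK α) (w : List α) : Config A :=
  ⟨A.q01, 0, A.q02, w.length + 1⟩

/-- The system halts in `c` if no successor configuration exists. -/
def Halted {α : Type} (A : DPWK α) (w : List α) (c : Config A) : Prop :=
  ¬ ∃ c', Step A w c c'

/-- A configuration is accepting if at least one component is in an accepting state. -/
def AccConf {α : Type} (A : DPWK α) (c : Config A) : Prop :=
  c.p ∈ A.F1 ∨ c.q ∈ A.F2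

/-- `cs` is an accepting computation of `A` on `w`: it starts in the initial
configuration, follows the step relation, and ends in a halting configuration
with at least one component in an accepting state. -/
def AccComp {α : Type} (A : DPWK α) (w : List α) (cs : List (Config A)) : Prop :=
  cs.head? = some (initConf A w) ∧ List.Chain' (Step A w) cs ∧
    ∃ c, cs.getLast? = some c ∧ Halted A w c ∧ AccConf A c

def Accepts {α : Type} (A : DPWK α) (w : List α) : Prop := ∃ cs, AccComp A w cs

/-- The language accepted by `A`. -/
def lang {α : Type} (A : DPWK α) : Set (List α) := { w | Accepts A w }

/-- One backward computation step, induced by reverse transition functions `δ'ᵢ` and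
reverse broadcast functions `μ'ᵢ`: the heads first move to their predecessor
positions (the upper head left, the lower head right) and then read the symbols there. -/
def BackStep {α : Type} (A : DPWK α)
    (δ'1 : A.Q1 → TSym α → Option A.M → Option (A.Q1 × Bool))
    (δ'2 : A.Q2 → TSym α → Option A.M → Option (A.Q2 × Bool))
    (μ'1 : A.Q1 → TSym α → Option A.M)
    (μ'2 : A.Q2 → TSym α → Option A.M)
    (w : List α) (c' c : Config A) : Prop :=
  ∃ d1 d2 : Bool,
    δ'1 c'.p (tape w c.i) (μ'2 c'.q (tape w c.j)) = some (c.p, d1) ∧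
    δ'2 c'.q (tape w c.j) (μ'1 c'.p (tape w c.i)) = some (c.q, d2) ∧
    c'.i = c.i + (cond d1 1 0) ∧ c.j = c'.j + (cond d2 1 0)

/-- A witness of reversibility: reverse transition and broadcast functions whose
induced backward step relation is exactly the inverse of the forward step relation,
so every configuration has at most one predecessor, computable by such a system. -/
structure RevWitness {α : Type} (A : DPWK α) where
  δ'1 : A.Q1 → TSym α → Option A.M → Option (A.Q1 × Bool)
  δ'2 : A.Q2 → TSym α → Option A.M → Option (A.Q2 × Bool)
  μ'1 : A.Q1 → TSym α → Option A.M
  μ'2 : A.Q2 → TSym α → Option A.M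
  inverse : ∀ (w : List α) (c c' : Config A),
    BackStep A δ'1 δ'2 μ'1 μ'2 w c' c ↔ Step A w c c'

/-- A reversible deterministic two-party Watson-Crick system (REV-PWK). -/
def Reversible {α : Type} (A : DPWK α) : Prop := Nonempty (RevWitness A)

/-- Number of messages (`0`, `1` or `2`) broadcast in one step from configuration `c`,
with respect to broadcast functions `μ1`, `μ2`. -/
def stepMsgs {α : Type} (A : DPWK α)
    (μ1 : A.Q1 → TSym α → Option A.M) (μ2 : A.Q2 → TSym α → Option A.M)
    (w : List α) (c : Config A) : ℕ :=
  ((μ1 c.p (tape w c.i)).elim 0 fun _ => 1) + ((μ2 c.q (tape w c.j)).elim 0 fun _ => 1)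

/-- Total number of messages sent during the computation `cs` (no messages are
sent from the final, halting configuration). -/
def commCount {α : Type} (A : DPWK α)
    (μ1 : A.Q1 → TSym α → Option A.M) (μ2 : A.Q2 → TSym α → Option A.M)
    (w : List α) (cs : List (Config A)) : ℕ :=
  (cs.dropLast.map (stepMsgs A μ1 μ2 w)).sum

/-- `A` is a reversible system that is communication bounded by `f`: it is reversible
and every word of its language is accepted by a computation in which the number of
messages sent in the forward computation and in the reverse computation are each at
most `f` of the input length. -/
def RevCommBounded {α : Type} (A : DPWK α) (f : ℕ → ℕ) : Prop :=
  ∃ Wit : RevWitness A, ∀ w ∈ lang A, ∃ cs, AccComp A w cs ∧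
    commCount A A.μ1 A.μ2 w cs ≤ f w.length ∧
    commCount A Wit.μ'1 Wit.μ'2 w cs.reverse ≤ f w.length

/-- `A` (not necessarily reversible) is communication bounded by `f`. -/
def CommBounded {α : Type} (A : DPWK α) (f : ℕ → ℕ) : Prop :=
  ∀ w ∈ lang A, ∃ cs, AccComp A w cs ∧ commCount A A.μ1 A.μ2 w cs ≤ f w.length

/-- The family of languages accepted by reversible deterministic two-party
Watson-Crick systems over the alphabet `α`. -/
def RevPWKLangs (α : Type) : Set (Set (List α)) :=
  { L | ∃ A : DPWK α, Reversible A ∧ lang A = L }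

/-- Languages accepted by REV-PWKs with `O(f)` communication. -/
def RevPWKLangsO (α : Type) (f : ℕ → ℕ) : Set (Set (List α)) :=
  { L | ∃ (A : DPWK α) (C : ℕ),
      RevCommBounded A (fun n => C * f n + C) ∧ lang A = L }

/-- Languages accepted by (possibly irreversible) DPWKs with `O(f)` communication. -/
def PWKLangsO (α : Type) (f : ℕ → ℕ) : Set (Set (List α)) :=
  { L | ∃ (A : DPWK α) (C : ℕ),
      CommBounded A (fun n => C * f n + C) ∧ lang A = L }

end WK

/-- A (partial) deterministic finite automaton. -/
structure PDFA (α : Type) where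
  Q : Type
  fQ : Fintype Q
  δ : Q → α → Option Q
  q0 : Q
  F : Set Q

/-- Running a partial DFA from a state; undefined transitions abort the run. -/
def PDFA.evalFrom? {α : Type} (D : PDFA α) : D.Q → List α → Option D.Q
  | q, [] => some q
  | q, a :: w => (D.δ q a).bind fun q' => D.evalFrom? q' w

/-- The language of a partial DFA: words on which the complete run is defined and
ends in an accepting state. -/
def PDFA.lang {α : Type} (D : PDFA α) : Set (List α) :=
  { w | ∃ q ∈ D.F, D.evalFrom? D.q0 w = some q }

/-- A DFA is reversible if, for every input symbol, its partial transition function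
is injective: every state has at most one predecessor under each symbol. -/
def PDFA.Reversible {α : Type} (D : PDFA α) : Prop :=
  ∀ (a : α) (p p' q : D.Q), D.δ p a = some q → D.δ p' a = some q → p = p'


/-- The witness language: nonempty words of all `true`s. -/
def Ltrue : Language Bool := {w | w ≠ [] ∧ ∀ x ∈ w, x = true}

/-- A 3-state total DFA accepting `Ltrue`. -/
def Mtrue : DFA Bool (Fin 3) :=
  ⟨fun q a => if a = true ∧ q ≠ 2 then 1 else 2, 0, {1}⟩

lemma false_not_mem_iff (w : List Bool) : false ∉ w ↔ ∀ x ∈ w, x = true := by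
  constructor
  · intro h x hx
    cases x
    · exact absurd hx h
    · rfl
  · intro h hx
    exact Bool.noConfusion (h false hx)

lemma Mtrue_eval (w : List Bool) :
    Mtrue.eval w = if w = [] then 0 else if ∀ x ∈ w, x = true then 1 else 2 := by
  induction w using List.reverseRecOn with
  | nil => rfl
  | append_singleton w a ih =>
    rw [DFA.eval, DFA.evalFrom_append_singleton]
    change Mtrue.step (Mtrue.eval w) a = _
    rw [ih]
    rcases eq_or_ne w [] with rfl | hw
    · cases a <;> simp [Mtrue, DFA.step]
    · by_cases hall : ∀ x ∈ w, x = true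
      · cases a <;> simp [Mtrue, DFA.step, hw, hall]
      · have hf : false ∈ w := by
          by_contra hf
          exact hall ((false_not_mem_iff w).mp hf)
        simp [Mtrue, DFA.step, hw, hall, hf]

lemma Mtrue_accepts : Mtrue.accepts = Ltrue := by
  ext w
  rw [DFA.mem_accepts, Mtrue_eval]
  constructor
  · intro h
    rcases eq_or_ne w [] with rfl | hw
    · simp [Mtrue] at h
    · by_cases hall : ∀ x ∈ w, x = true
      · exact ⟨hw, hall⟩
      · have hf : false ∈ w := by
          by_contra hf
          exact hall ((false_not_mem_iff w).mp hf)
        simp [hw, hf, Mtrue] at h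
  · rintro ⟨hw, hall⟩
    have hf : false ∉ w := (false_not_mem_iff w).mpr hall
    simp [hw, hf, Mtrue]

lemma PDFA.evalFrom?_append_singleton {α : Type} (D : PDFA α) (q : D.Q)
    (w : List α) (a : α) :
    D.evalFrom? q (w ++ [a]) = (D.evalFrom? q w).bind (fun p => D.δ p a) := by
  induction w generalizing q with
  | nil => simp [PDFA.evalFrom?]
  | cons b w ih =>
    simp only [List.cons_append, PDFA.evalFrom?]
    cases D.δ q b <;> simp [ih]


open WK in
/-- Reversible one-way deterministic finite automata are weaker than
general DFAs: there is a regular language (over the binary alphabet `Bool`) that is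
not accepted by any reversible DFA. -/
theorem exists_regular_not_reversible_dfa :
    ∃ L : Language Bool, L.IsRegular ∧
      ∀ D : PDFA Bool, D.Reversible → D.lang ≠ L := by
  refine ⟨Ltrue, ⟨Fin 3, inferInstance, Mtrue, Mtrue_accepts⟩, ?_⟩
  intro D hrev heq
  haveI : Fintype D.Q := D.fQ
  -- the run on `trueⁿ` is always defined
  have hdef : ∀ n : ℕ, ∃ p, D.evalFrom? D.q0 (List.replicate n true) = some p := by
    intro n
    rcases Nat.eq_zero_or_pos n with rfl | hn
    · exact ⟨D.q0, rfl⟩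
    · have hmem : List.replicate n true ∈ Ltrue := by
        refine ⟨?_, fun x hx => List.eq_of_mem_replicate hx⟩
        simp [List.replicate_eq_nil_iff]
        omega
      rw [← heq] at hmem
      obtain ⟨q, _, hq⟩ := hmem
      exact ⟨q, hq⟩
  choose s hs using hdef
  have hstep : ∀ n : ℕ, D.δ (s n) true = some (s (n + 1)) := by
    intro n
    have h := hs (n + 1)
    rw [List.replicate_succ', PDFA.evalFrom?_append_singleton, hs n] at h
    simpa using h
  have hback : ∀ m n : ℕ, s (m + 1) = s (n + 1) → s m = s n := by
    intro m n h
    exact hrev true _ _ _ (hstep m) (h ▸ hstep n)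
  have hshift : ∀ m d : ℕ, s m = s (m + d) → s 0 = s d := by
    intro m
    induction m with
    | zero => intro d h; simpa using h
    | succ m ih =>
      intro d h
      have : s (m + 1) = s ((m + d) + 1) := by rw [h]; ring_nf
      exact ih d (hback _ _ this)
  obtain ⟨x, y, hxy, hsxy⟩ := Finite.exists_ne_map_eq_of_infinite s
  wlog hlt : x < y generalizing x y
  · exact this y x hxy.symm hsxy.symm (by omega)
  have hxd : s x = s (x + (y - x)) := by rw [Nat.add_sub_cancel' hlt.le]; exact hsxy
  have h0d := hshift x (y - x) hxd
  have hd1 : 1 ≤ y - x := by omega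
  -- `s (y - x)` is accepting
  have hmem : List.replicate (y - x) true ∈ D.lang := by
    rw [heq]
    refine ⟨?_, fun z hz => List.eq_of_mem_replicate hz⟩
    simp [List.replicate_eq_nil_iff]
    omega
  obtain ⟨q, hqF, hq⟩ := hmem
  have hq' : q = s (y - x) := by
    rw [hs (y - x)] at hq; exact (Option.some.inj hq).symm
  -- so the initial state is accepting, hence `[] ∈ Ltrue`, contradiction
  have hs0 : s 0 = D.q0 := by
    have := hs 0
    simp [PDFA.evalFrom?] at this
    exact this.symm
  have : ([] : List Bool) ∈ D.lang :=
    ⟨D.q0, by rw [← hs0, h0d, ← hq']; exact hqF, rfl⟩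
  rw [heq] at this
  exact this.1 rfl
end

section
/- The regular language a^* b^* a^* over alphabet {a,b} is not accepted by any reversible deterministic finite automaton. -/
/-- The language `a^* b^* a^*` over `{a,b}` (with `a = false`, `b = true`). -/
def abaLang : Set (List Bool) :=
  { w | ∃ k l m : ℕ,
      w = List.replicate k false ++ List.replicate l true ++ List.replicate m false }

section Aux

/-! ### Auxiliary material for the proof -/

inductive AbaSt | s0 | s1 | s2 | s3
  deriving DecidableEq

instance : Fintype AbaSt :=
  ⟨{AbaSt.s0, AbaSt.s1, AbaSt.s2, AbaSt.s3}, fun x => by cases x <;> simp⟩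

open AbaSt in
def abaDFA : DFA Bool AbaSt where
  step
    | s0, false => s0
    | s0, true => s1
    | s1, true => s1
    | s1, false => s2
    | s2, false => s2
    | _, _ => s3
  start := s0
  accept := {s0, s1, s2}

namespace AbaSt

lemma eval_dead (w : List Bool) : abaDFA.evalFrom s3 w = s3 := by
  induction w with
  | nil => rfl
  | cons x w ih => cases x <;> simpa [DFA.evalFrom, abaDFA] using ih

lemma eval2_a (m : ℕ) : abaDFA.evalFrom s2 (List.replicate m false) = s2 := by
  induction m with
  | zero => rfl
  | succ m ih => simpa [List.replicate_succ, DFA.evalFrom, abaDFA] using ih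

lemma eval1_b (l : ℕ) : abaDFA.evalFrom s1 (List.replicate l true) = s1 := by
  induction l with
  | zero => rfl
  | succ l ih => simpa [List.replicate_succ, DFA.evalFrom, abaDFA] using ih

lemma eval0_a (k : ℕ) : abaDFA.evalFrom s0 (List.replicate k false) = s0 := by
  induction k with
  | zero => rfl
  | succ k ih => simpa [List.replicate_succ, DFA.evalFrom, abaDFA] using ih

lemma eval1_a (m : ℕ) :
    abaDFA.evalFrom s1 (List.replicate m false) ∈ abaDFA.accept := by
  cases m with
  | zero => simp [abaDFA, DFA.evalFrom]
  | succ m =>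
      rw [List.replicate_succ]
      have : abaDFA.evalFrom s1 (false :: List.replicate m false)
          = abaDFA.evalFrom s2 (List.replicate m false) := rfl
      rw [this, eval2_a]
      simp [abaDFA]

lemma claim (w : List Bool) :
    (abaDFA.evalFrom s2 w ≠ s3 → ∃ m, w = List.replicate m false) ∧
    (abaDFA.evalFrom s1 w ≠ s3 →
      ∃ l m, w = List.replicate l true ++ List.replicate m false) ∧
    (abaDFA.evalFrom s0 w ≠ s3 → w ∈ abaLang) := by
  induction w with
  | nil =>
      refine ⟨fun _ => ⟨0, rfl⟩, fun _ => ⟨0, 0, rfl⟩, fun _ => ⟨0, 0, 0, rfl⟩⟩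
  | cons x w ih =>
      obtain ⟨ih2, ih1, ih0⟩ := ih
      refine ⟨?_, ?_, ?_⟩
      · intro h
        cases x with
        | false =>
            obtain ⟨m, hm⟩ := ih2 h
            exact ⟨m + 1, by rw [List.replicate_succ, hm]⟩
        | true =>
            exact absurd (eval_dead w) h
      · intro h
        cases x with
        | false =>
            obtain ⟨m, hm⟩ := ih2 h
            exact ⟨0, m + 1, by rw [List.replicate_succ, hm]; rfl⟩
        | true =>
            obtain ⟨l, m, hm⟩ := ih1 h
            exact ⟨l + 1, m, by rw [List.replicate_succ, hm]; rfl⟩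
      · intro h
        cases x with
        | false =>
            obtain ⟨k, l, m, hm⟩ := ih0 h
            exact ⟨k + 1, l, m, by rw [List.replicate_succ, hm]; rfl⟩
        | true =>
            obtain ⟨l, m, hm⟩ := ih1 h
            exact ⟨0, l + 1, m, by rw [List.replicate_succ, hm]; rfl⟩

lemma accepts_eq : abaDFA.accepts = (abaLang : Language Bool) := by
  ext w
  rw [DFA.mem_accepts]
  constructor
  · intro h
    have hne : abaDFA.eval w ≠ s3 := by
      intro he
      rw [he] at h
      simp [abaDFA] at h
    exact (claim w).2.2 hne
  · rintro ⟨k, l, m, rfl⟩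
    show abaDFA.evalFrom s0 _ ∈ _
    rw [DFA.evalFrom_of_append, DFA.evalFrom_of_append, eval0_a]
    cases l with
    | zero =>
        simp only [List.replicate_zero, DFA.evalFrom_nil, eval0_a]
        simp [abaDFA]
    | succ l =>
        rw [List.replicate_succ]
        have : abaDFA.evalFrom s0 (true :: List.replicate l true)
            = abaDFA.evalFrom s1 (List.replicate l true) := rfl
        rw [this, eval1_b]
        exact eval1_a m

end AbaSt

lemma PDFA.evalFrom?_append {α : Type} (D : PDFA α) (q : D.Q) (u v : List α) :
    D.evalFrom? q (u ++ v) = (D.evalFrom? q u).bind fun p => D.evalFrom? p v := by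
  induction u generalizing q with
  | nil => rfl
  | cons a u ih =>
      simp only [List.cons_append, PDFA.evalFrom?, Option.bind_assoc]
      cases D.δ q a with
      | none => rfl
      | some q' => simpa using ih q'

lemma aba_notmem (k : ℕ) (hk : 1 ≤ k) :
    (true :: (List.replicate k false ++ [true])) ∉ abaLang := by
  rintro ⟨a, b, c, h⟩
  cases a with
  | succ a => simp [List.replicate_succ] at h
  | zero =>
      cases b with
      | zero =>
          simp only [List.replicate_zero, List.nil_append] at h
          have : true ∈ List.replicate c false := by
            rw [← h]; simp
          simp [List.mem_replicate] at this
      | succ b =>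
          rw [List.replicate_succ] at h
          simp only [List.replicate_zero, List.nil_append, List.cons_append,
            List.cons.injEq] at h
          obtain ⟨-, h⟩ := h
          obtain ⟨k', rfl⟩ := Nat.exists_eq_add_of_le hk
          cases b with
          | succ b =>
              rw [show 1 + k' = k' + 1 from by omega] at h
              simp [List.replicate_succ] at h
          | zero =>
              simp only [List.replicate_zero, List.nil_append] at h
              have : true ∈ List.replicate c false := by
                rw [← h]; simp
              simp [List.mem_replicate] at this

end Aux

open WK in
/-- The regular language `a^* b^* a^*` is not accepted by any
reversible deterministic finite automaton. -/
theorem aba_not_reversible_dfa :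
    Language.IsRegular (abaLang : Language Bool) ∧
      ∀ D : PDFA Bool, D.Reversible → D.lang ≠ abaLang := by
  constructor
  · exact ⟨AbaSt, inferInstance, abaDFA, AbaSt.accepts_eq⟩
  · intro D hrev heq
    haveI := D.fQ
    have h0 : ∀ n : ℕ, ∃ q ∈ D.F,
        D.evalFrom? D.q0 (true :: List.replicate n false) = some q := by
      intro n
      have : (true :: List.replicate n false) ∈ D.lang := by
        rw [heq]; exact ⟨0, 1, n, by simp⟩
      exact this
    obtain ⟨qb0, -, hq⟩ := h0 0
    simp only [List.replicate_zero, PDFA.evalFrom?] at hq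
    have hδ0 : D.δ D.q0 true = some qb0 := by
      cases h : D.δ D.q0 true with
      | none => rw [h] at hq; simp at hq
      | some p => rw [h] at hq; simpa using hq
    have hdef : ∀ n : ℕ, ∃ p, D.evalFrom? qb0 (List.replicate n false) = some p := by
      intro n
      obtain ⟨q, -, hq⟩ := h0 n
      rw [show (true :: List.replicate n false) = [true] ++ List.replicate n false
        from rfl, PDFA.evalFrom?_append] at hq
      simp only [PDFA.evalFrom?, hδ0, Option.bind_some, Option.bind_some] at hq
      exact ⟨q, hq⟩
    choose st hst using hdef
    have hqb : qb0 = st 0 := by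
      have := hst 0
      simp only [List.replicate_zero, PDFA.evalFrom?, Option.some.injEq] at this
      exact this
    have hstep : ∀ n, D.δ (st n) false = some (st (n + 1)) := by
      intro n
      have h := hst (n + 1)
      rw [List.replicate_succ', PDFA.evalFrom?_append, hst n] at h
      simpa [PDFA.evalFrom?] using h
    have hback : ∀ m k, st m = st (m + k) → st 0 = st k := by
      intro m
      induction m with
      | zero => intro k h; simpa using h
      | succ m ih =>
          intro k h
          have h2 := hstep (m + k)
          rw [show m + k + 1 = m + 1 + k from by omega, ← h] at h2
          exact ih k (hrev false (st m) (st (m + k)) (st (m + 1)) (hstep m) h2)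
    obtain ⟨m, n, hne, hmn⟩ := Finite.exists_ne_map_eq_of_infinite st
    have key : ∃ k, 1 ≤ k ∧ st 0 = st k := by
      rcases hne.lt_or_gt with h | h
      · refine ⟨n - m, by omega, hback m (n - m) ?_⟩
        rwa [show m + (n - m) = n from by omega]
      · refine ⟨m - n, by omega, hback n (m - n) ?_⟩
        rw [show n + (m - n) = m from by omega]
        exact hmn.symm
    obtain ⟨k, hk, hcyc⟩ := key
    -- the word [true] ++ a^k ++ [true] is accepted but not in abaLang
    have htt : ∃ q ∈ D.F, D.evalFrom? D.q0 [true, true] = some q := by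
      have : ([true, true] : List Bool) ∈ D.lang := by
        rw [heq]; exact ⟨0, 2, 0, by simp [List.replicate_succ]⟩
      exact this
    obtain ⟨qf, hqf, hev⟩ := htt
    simp only [PDFA.evalFrom?, hδ0, Option.bind_some] at hev
    have hw : D.evalFrom? D.q0 (true :: (List.replicate k false ++ [true]))
        = some qf := by
      have : D.evalFrom? D.q0 (true :: (List.replicate k false ++ [true]))
          = D.evalFrom? qb0 (List.replicate k false ++ [true]) := by
        simp [PDFA.evalFrom?, hδ0]
      rw [this, PDFA.evalFrom?_append, hst k, ← hcyc, ← hqb]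
      simpa [PDFA.evalFrom?] using hev
    have : (true :: (List.replicate k false ++ [true])) ∈ abaLang := by
      rw [← heq]
      exact ⟨qf, hqf, hw⟩
    exact aba_notmem k hk this
end

section
/- The family of languages accepted by reversible deterministic two-party Watson-Crick systems is closed under complementation. -/
namespace WKC
open WK

/-! ### Tape lemmas -/

lemma tape_zero {α : Type} (w : List α) : tape w 0 = Sum.inr false := rfl

lemma tape_succ {α : Type} (w : List α) (m : ℕ) :
    tape w (m+1) = if h : m < w.length then Sum.inl w[m] else Sum.inr true := by
  unfold tape
  rw [List.getD_eq_getElem?_getD, List.cons_append, List.getElem?_cons_succ]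
  rcases Nat.lt_or_ge m w.length with h | h
  · rw [List.getElem?_append_left (by simpa using h)]
    simp [h, List.getElem?_eq_getElem (by simpa using h)]
  · rw [List.getElem?_append_right (by simpa using h)]
    simp only [List.length_map]
    rcases Nat.eq_or_lt_of_le h with rfl | h2
    · simp
    · rw [List.getElem?_eq_none (by simp; omega)]
      simp [Nat.not_lt.mpr (le_of_lt h2)]

lemma tape_eq_inr_false_iff {α : Type} (w : List α) (k : ℕ) :
    tape w k = Sum.inr false ↔ k = 0 := by
  rcases k with _ | m
  · simp [tape_zero]
  · rw [tape_succ]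
    split <;> simp

lemma tape_ge {α : Type} (w : List α) (k : ℕ) (hk : w.length + 1 ≤ k) :
    tape w k = Sum.inr true := by
  rcases k with _ | m
  · omega
  · rw [tape_succ]
    rw [dif_neg (by omega)]

lemma tape_eq_inr_true_iff {α : Type} (w : List α) (k : ℕ) :
    tape w k = Sum.inr true ↔ w.length + 1 ≤ k := by
  constructor
  · intro h
    by_contra hk
    push_neg at hk
    rcases k with _ | m
    · simp [tape_zero] at h
    · rw [tape_succ, dif_pos (by omega)] at h
      exact absurd h (by simp)
  · exact tape_ge w k

lemma tape_min {α : Type} (w : List α) (i : ℕ) :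
    tape w (min i (w.length + 1)) = tape w i := by
  rcases le_total i (w.length + 1) with h | h
  · rw [min_eq_left h]
  · rw [min_eq_right h, tape_ge _ _ le_rfl, tape_ge _ _ h]

end WKC

namespace WKC
open WK

variable {α : Type}

/-! ### Deterministic step function and run sequences -/

/-- Helper combining the two transition results into a configuration update. -/
def mkStep (A : DPWK α) :
    Option (A.Q1 × Bool) → Option (A.Q2 × Bool) → ℕ → ℕ → Option (Config A)
  | some (p', d1), some (q', d2), i, j =>
      if (cond d2 1 0 : ℕ) ≤ j then
        some ⟨p', i + cond d1 1 0, q', j - cond d2 1 0⟩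
      else none
  | none, _, _, _ => none
  | some _, none, _, _ => none

/-- The forward step as a partial function. -/
def stepFn (A : DPWK α) (w : List α) (c : Config A) : Option (Config A) :=
  mkStep A (A.δ1 c.p (tape w c.i) (A.μ2 c.q (tape w c.j)))
    (A.δ2 c.q (tape w c.j) (A.μ1 c.p (tape w c.i))) c.i c.j

lemma step_iff_stepFn (A : DPWK α) (w : List α) (c c' : Config A) :
    Step A w c c' ↔ stepFn A w c = some c' := by
  unfold Step stepFn
  constructor
  · rintro ⟨d1, d2, h1, h2, hi, hj⟩
    rw [h1, h2]
    show (if (cond d2 1 0 : ℕ) ≤ c.j then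
        some (⟨_, c.i + cond d1 1 0, _, c.j - cond d2 1 0⟩ : Config A) else none) = some c'
    rw [if_pos (by omega), ← hi, show c.j - cond d2 1 0 = c'.j from by omega]
  · intro h
    rcases h1 : A.δ1 c.p (tape w c.i) (A.μ2 c.q (tape w c.j)) with _ | ⟨p', d1⟩ <;>
      rw [h1] at h
    · exact absurd h (by simp [mkStep])
    rcases h2 : A.δ2 c.q (tape w c.j) (A.μ1 c.p (tape w c.i)) with _ | ⟨q', d2⟩ <;>
      rw [h2] at h
    · exact absurd h (by simp [mkStep])
    by_cases hc : (cond d2 1 0 : ℕ) ≤ c.j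
    · rw [show mkStep A (some (p', d1)) (some (q', d2)) c.i c.j =
        some ⟨p', c.i + cond d1 1 0, q', c.j - cond d2 1 0⟩ from by
          simp [mkStep, hc]] at h
      obtain rfl := Option.some.inj h
      exact ⟨d1, d2, rfl, rfl, rfl,
        show c.j = c.j - (cond d2 1 0) + (cond d2 1 0) from by omega⟩
    · rw [show mkStep A (some (p', d1)) (some (q', d2)) c.i c.j = none from by
        simp [mkStep, hc]] at h
      exact absurd h (by simp)

lemma halted_iff_stepFn (A : DPWK α) (w : List α) (c : Config A) :
    Halted A w c ↔ stepFn A w c = none := by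
  unfold Halted
  constructor
  · intro h
    rcases hs : stepFn A w c with _ | c'
    · rfl
    · exact absurd ⟨c', (step_iff_stepFn A w c c').mpr hs⟩ h
  · rintro h ⟨c', hc'⟩
    rw [(step_iff_stepFn A w c c').mp hc'] at h
    exact absurd h (by simp)

/-- Run the machine `k` steps from configuration `c`. -/
def seqFrom (A : DPWK α) (w : List α) : Config A → ℕ → Option (Config A)
  | c, 0 => some c
  | c, k+1 => (stepFn A w c).bind (fun c' => seqFrom A w c' k)

lemma seqFrom_succ_left (A : DPWK α) (w : List α) (c : Config A) (k : ℕ) :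
    seqFrom A w c (k+1) = (stepFn A w c).bind (fun c' => seqFrom A w c' k) := rfl

lemma seqFrom_succ_right (A : DPWK α) (w : List α) (c : Config A) (k : ℕ) :
    seqFrom A w c (k+1) = (seqFrom A w c k).bind (stepFn A w) := by
  induction k generalizing c with
  | zero =>
    show (stepFn A w c).bind (fun c' => seqFrom A w c' 0) = stepFn A w c
    rcases stepFn A w c with _ | c1 <;> rfl
  | succ k ih =>
    rw [seqFrom_succ_left, seqFrom_succ_left A w c k]
    rcases h : stepFn A w c with _ | c1
    · simp
    · simpa using ih c1

lemma seqFrom_add (A : DPWK α) (w : List α) (c : Config A) (a b : ℕ) :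
    seqFrom A w c (a + b) = (seqFrom A w c a).bind (fun d => seqFrom A w d b) := by
  induction b with
  | zero =>
    show seqFrom A w c a = (seqFrom A w c a).bind (fun d => seqFrom A w d 0)
    rcases seqFrom A w c a with _ | d <;> rfl
  | succ b ih =>
    rw [show a + (b+1) = (a+b)+1 from rfl, seqFrom_succ_right, ih]
    rcases seqFrom A w c a with _ | d
    · simp
    · simp [seqFrom_succ_right]

lemma seqFrom_some_of_le (A : DPWK α) (w : List α) (c : Config A) {a b : ℕ}
    (hab : a ≤ b) {cb : Config A} (hb : seqFrom A w c b = some cb) :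
    ∃ ca, seqFrom A w c a = some ca := by
  rcases Nat.exists_eq_add_of_le hab with ⟨d, rfl⟩
  rw [seqFrom_add] at hb
  rcases h : seqFrom A w c a with _ | ca
  · rw [h] at hb; exact absurd hb (by simp)
  · exact ⟨ca, rfl⟩

/-- The run from the initial configuration. -/
def runSeq (A : DPWK α) (w : List α) (k : ℕ) : Option (Config A) :=
  seqFrom A w (initConf A w) k

lemma chain_of_seqFrom (A : DPWK α) (w : List α) :
    ∀ (k : ℕ) (c0 cl : Config A), seqFrom A w c0 k = some cl →
      ∃ cs : List (Config A), cs.head? = some c0 ∧ List.Chain' (Step A w) cs ∧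
        cs.getLast? = some cl := by
  intro k
  induction k with
  | zero =>
    intro c0 cl h
    have h' : c0 = cl := Option.some.inj h
    exact ⟨[c0], by simp, List.isChain_singleton _, by simp [h']⟩
  | succ k ih =>
    intro c0 cl h
    rw [seqFrom_succ_left] at h
    rcases h1 : stepFn A w c0 with _ | c1 <;> rw [h1] at h
    · exact absurd h (by simp)
    simp only [Option.bind_some] at h
    rcases ih c1 cl h with ⟨cs, hh, hch, hl⟩
    rcases cs with _ | ⟨c1', t⟩
    · exact absurd hh (by simp)
    simp only [List.head?_cons, Option.some.injEq] at hh
    subst hh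
    refine ⟨c0 :: c1' :: t, by simp, ?_, ?_⟩
    · exact List.isChain_cons_cons.mpr ⟨(step_iff_stepFn A w c0 c1').mpr h1, hch⟩
    · rw [List.getLast?_cons_cons]; exact hl

lemma seqFrom_of_chain (A : DPWK α) (w : List α) :
    ∀ (cs : List (Config A)) (c0 cl : Config A), cs.head? = some c0 →
      List.Chain' (Step A w) cs → cs.getLast? = some cl →
      ∃ k, seqFrom A w c0 k = some cl := by
  intro cs
  induction cs with
  | nil => intro c0 cl h; exact absurd h (by simp)
  | cons a t ih =>
    intro c0 cl hh hch hl
    obtain rfl : c0 = a := by simpa using hh.symm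
    rcases t with _ | ⟨b, t'⟩
    · obtain rfl : c0 = cl := by simpa using hl
      exact ⟨0, rfl⟩
    · rcases List.isChain_cons_cons.mp hch with ⟨hstep, hch'⟩
      rcases ih b cl (by simp) hch' (by rw [← hl, List.getLast?_cons_cons]) with ⟨k, hk⟩
      refine ⟨k+1, ?_⟩
      rw [seqFrom_succ_left, (step_iff_stepFn A w c0 b).mp hstep]
      simpa using hk

/-- Characterization of acceptance via the deterministic run. -/
lemma accepts_iff (A : DPWK α) (w : List α) :
    Accepts A w ↔ ∃ (k : ℕ) (c : Config A), runSeq A w k = some c ∧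
      stepFn A w c = none ∧ AccConf A c := by
  constructor
  · rintro ⟨cs, hh, hch, c, hl, hhalt, hacc⟩
    rcases seqFrom_of_chain A w cs _ _ hh hch hl with ⟨k, hk⟩
    exact ⟨k, c, hk, (halted_iff_stepFn A w c).mp hhalt, hacc⟩
  · rintro ⟨k, c, hk, hhalt, hacc⟩
    rcases chain_of_seqFrom A w k _ _ hk with ⟨cs, hh, hch, hl⟩
    exact ⟨cs, hh, hch, c, hl, (halted_iff_stepFn A w c).mpr hhalt, hacc⟩

end WKC

namespace WKC
open WK

variable {α : Type}

/-! ### Stationary loops -/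

open scoped Classical in
/-- Auxiliary: combine transition results into a stationary step. -/
noncomputable def statAux (A : DPWK α) (s : TSym α) :
    Option (A.Q1 × Bool) → Option (A.Q2 × Bool) → Option (A.Q1 × A.Q2)
  | some r1, some r2 =>
      if (r1.2 = false ∨ s = Sum.inr true) ∧ r2.2 = false then some (r1.1, r2.1) else none
  | none, _ => none
  | some _, none => none

/-- One stationary step of the pair dynamics with fixed symbols `s`, `t`. -/
noncomputable def statStep (A : DPWK α) (s t : TSym α) (pq : A.Q1 × A.Q2) :
    Option (A.Q1 × A.Q2) :=
  statAux A s (A.δ1 pq.1 s (A.μ2 pq.2 t)) (A.δ2 pq.2 t (A.μ1 pq.1 s))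

noncomputable def statIter (A : DPWK α) (s t : TSym α) :
    (A.Q1 × A.Q2) → ℕ → Option (A.Q1 × A.Q2)
  | pq, 0 => some pq
  | pq, k+1 => (statStep A s t pq).bind (fun pq' => statIter A s t pq' k)

/-- The pair dynamics with fixed symbols runs forever without moving. -/
def Loop (A : DPWK α) (s t : TSym α) (pq : A.Q1 × A.Q2) : Prop :=
  ∀ k, (statIter A s t pq k).isSome

lemma loop_unfold {A : DPWK α} {s t : TSym α} {pq : A.Q1 × A.Q2}
    (h : Loop A s t pq) :
    ∃ pq', statStep A s t pq = some pq' ∧ Loop A s t pq' := by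
  have h1 := h 1
  rcases hs : statStep A s t pq with _ | pq'
  · rw [show statIter A s t pq 1 =
      (statStep A s t pq).bind (fun pq' => statIter A s t pq' 0) from rfl, hs] at h1
    exact absurd h1 (by simp)
  · refine ⟨pq', rfl, fun k => ?_⟩
    have hk := h (k+1)
    rw [show statIter A s t pq (k+1) =
      (statStep A s t pq).bind (fun x => statIter A s t x k) from rfl, hs] at hk
    simpa using hk


lemma statStep_eq_some_iff {A : DPWK α} {s t : TSym α} {pq pq' : A.Q1 × A.Q2} :
    statStep A s t pq = some pq' ↔
      ∃ d1 d2 : Bool, A.δ1 pq.1 s (A.μ2 pq.2 t) = some (pq'.1, d1) ∧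
        A.δ2 pq.2 t (A.μ1 pq.1 s) = some (pq'.2, d2) ∧
        (d1 = false ∨ s = Sum.inr true) ∧ d2 = false := by
  unfold statStep
  rcases h1 : A.δ1 pq.1 s (A.μ2 pq.2 t) with _ | ⟨p', d1⟩
  · simp [statAux]
  rcases h2 : A.δ2 pq.2 t (A.μ1 pq.1 s) with _ | ⟨q', d2⟩
  · simp [statAux]
  by_cases hc : (d1 = false ∨ s = Sum.inr true) ∧ d2 = false
  · rw [show statAux A s (some (p', d1)) (some (q', d2)) = some (p', q') from by
      simp [statAux, hc]]
    constructor
    · rintro h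
      obtain rfl := Option.some.inj h
      exact ⟨d1, d2, rfl, rfl, hc.1, hc.2⟩
    · rintro ⟨e1, e2, he1, he2, hc1, hc2⟩
      obtain ⟨hp, hd1⟩ := Prod.mk.injEq _ _ _ _ ▸ Option.some.inj he1
      obtain ⟨hq, hd2⟩ := Prod.mk.injEq _ _ _ _ ▸ Option.some.inj he2
      rw [show pq' = (pq'.1, pq'.2) from rfl, ← hp, ← hq]
  · rw [show statAux A s (some (p', d1)) (some (q', d2)) = none from by
      simp only [statAux, if_neg hc]]
    constructor
    · intro h; exact absurd h (by simp)
    · rintro ⟨e1, e2, he1, he2, hc1, hc2⟩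
      obtain ⟨hp, hd1⟩ := Prod.mk.injEq _ _ _ _ ▸ Option.some.inj he1
      obtain ⟨hq, hd2⟩ := Prod.mk.injEq _ _ _ _ ▸ Option.some.inj he2
      exact absurd ⟨by rw [hd1]; exact hc1, by rw [hd2]; exact hc2⟩ hc

/-- Along the real run, a stationary loop keeps the tape symbols and the loop property. -/
lemma loop_invariant (A : DPWK α) (w : List α) (c : Config A)
    (hL : Loop A (tape w c.i) (tape w c.j) (c.p, c.q)) :
    ∀ k, ∃ ck, seqFrom A w c k = some ck ∧
      tape w ck.i = tape w c.i ∧ tape w ck.j = tape w c.j ∧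
      Loop A (tape w c.i) (tape w c.j) (ck.p, ck.q) := by
  set s := tape w c.i with hs
  set t := tape w c.j with ht
  intro k
  induction k with
  | zero => exact ⟨c, rfl, rfl, rfl, hL⟩
  | succ k ih =>
    rcases ih with ⟨ck, hck, hsi, hsj, hLk⟩
    rcases loop_unfold hLk with ⟨pq', hstep, hL'⟩
    rcases statStep_eq_some_iff.mp hstep with ⟨d1, d2, h1, h2, hc1, hc2⟩
    subst hc2
    have hstepFn : stepFn A w ck = some ⟨pq'.1, ck.i + cond d1 1 0, pq'.2, ck.j⟩ := by
      unfold stepFn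
      rw [hsi, hsj, h1, h2]
      show (if ((0:ℕ) ≤ ck.j) then
        some (⟨pq'.1, ck.i + cond d1 1 0, pq'.2, ck.j - 0⟩ : Config A) else none) = _
      rw [if_pos (Nat.zero_le _)]
      simp
    refine ⟨⟨pq'.1, ck.i + cond d1 1 0, pq'.2, ck.j⟩, ?_, ?_, hsj, hL'⟩
    · rw [seqFrom_succ_right, hck]
      simpa using hstepFn
    · show tape w (ck.i + cond d1 1 0) = s
      rcases hc1 with rfl | hse
      · simpa using hsi
      · have : w.length + 1 ≤ ck.i := (tape_eq_inr_true_iff w ck.i).mp (by rw [hsi, ← hse])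
        rw [tape_ge w _ (by omega), hse]

end WKC

namespace WKC
open WK

variable {α : Type}

/-- If the run never halts, a stationary loop eventually occurs on the run. -/
lemma loop_of_no_halt (A : DPWK α) (w : List α)
    (hall : ∀ k, ∃ c, runSeq A w k = some c) :
    ∃ K cK, runSeq A w K = some cK ∧
      Loop A (tape w cK.i) (tape w cK.j) (cK.p, cK.q) := by
  classical
  choose cfg hcfg using hall
  set n := w.length with hn
  have hstep : ∀ k, Step A w (cfg k) (cfg (k+1)) := by
    intro k
    rw [step_iff_stepFn]
    have h1 := hcfg (k+1)
    rw [show runSeq A w (k+1) = (runSeq A w k).bind (stepFn A w) from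
      seqFrom_succ_right _ _ _ _, hcfg k] at h1
    simpa using h1
  have hdata : ∀ k, ∃ d1 d2 : Bool,
      A.δ1 (cfg k).p (tape w (cfg k).i) (A.μ2 (cfg k).q (tape w (cfg k).j)) =
        some ((cfg (k+1)).p, d1) ∧
      A.δ2 (cfg k).q (tape w (cfg k).j) (A.μ1 (cfg k).p (tape w (cfg k).i)) =
        some ((cfg (k+1)).q, d2) ∧
      (cfg (k+1)).i = (cfg k).i + cond d1 1 0 ∧ (cfg k).j = (cfg (k+1)).j + cond d2 1 0 :=
    fun k => hstep k
  have hj_le : ∀ k, (cfg k).j ≤ n + 1 := by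
    intro k
    induction k with
    | zero =>
      have : cfg 0 = initConf A w := Option.some.inj (hcfg 0).symm
      rw [this]; exact le_rfl
    | succ k ih =>
      rcases hdata k with ⟨d1, d2, _, _, _, hj⟩
      omega
  set g : ℕ → ℕ := fun k => min (cfg k).i (n+1) + ((n+1) - (cfg k).j) with hg
  have hg_mono : Monotone g := by
    apply monotone_nat_of_le_succ
    intro k
    rcases hdata k with ⟨d1, d2, _, _, hi, hj⟩
    have : (cfg k).i ≤ (cfg (k+1)).i := by omega
    have h2 : min (cfg k).i (n+1) ≤ min (cfg (k+1)).i (n+1) := by omega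
    have h3 : (cfg (k+1)).j ≤ (cfg k).j := by omega
    simp only [hg]
    omega
  have hg_bdd : ∀ k, g k ≤ 2*(n+1) := by
    intro k
    simp only [hg]
    have := hj_le k
    omega
  set M := Nat.findGreatest (fun v => ∃ k, g k = v) (2*(n+1)) with hM
  obtain ⟨K, hK⟩ : ∃ k, g k = M :=
    Nat.findGreatest_spec (P := fun v => ∃ k, g k = v) (m := g 0) (hg_bdd 0) ⟨0, rfl⟩
  have hfrozen : ∀ m, K ≤ m → g m = g K := by
    intro m hm
    have h1 : g m ≤ M := Nat.le_findGreatest (P := fun v => ∃ k, g k = v) (hg_bdd m) ⟨m, rfl⟩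
    have h2 : g K ≤ g m := hg_mono hm
    omega
  have hjfrozen : ∀ m, K ≤ m → (cfg m).j = (cfg K).j ∧
      min (cfg m).i (n+1) = min (cfg K).i (n+1) := by
    intro m hm
    have h1 := hfrozen m hm
    have h2 : min (cfg K).i (n+1) ≤ min (cfg m).i (n+1) := by
      have : Monotone (fun k => min (cfg k).i (n+1)) := by
        apply monotone_nat_of_le_succ
        intro k
        rcases hdata k with ⟨d1, d2, _, _, hi, _⟩
        omega
      exact this hm
    have h3 : (cfg m).j ≤ (cfg K).j := by
      have : Antitone (fun k => (cfg k).j) := by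
        apply antitone_nat_of_succ_le
        intro k
        rcases hdata k with ⟨d1, d2, _, _, _, hj⟩
        omega
      exact this hm
    have h4 := hj_le m
    have h5 := hj_le K
    simp only [hg] at h1
    omega
  set s := tape w (cfg K).i with hsdef
  set t := tape w (cfg K).j with htdef
  have hsym : ∀ m, K ≤ m → tape w (cfg m).i = s ∧ tape w (cfg m).j = t := by
    intro m hm
    constructor
    · rw [hsdef, ← tape_min w (cfg m).i, ← tape_min w (cfg K).i, ← hn,
        (hjfrozen m hm).2]
    · rw [htdef, (hjfrozen m hm).1]
  have key : ∀ (k m : ℕ), K ≤ m →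
      statIter A s t ((cfg m).p, (cfg m).q) k = some ((cfg (m+k)).p, (cfg (m+k)).q) := by
    intro k
    induction k with
    | zero => intro m _; rfl
    | succ k ih =>
      intro m hm
      rcases hdata m with ⟨d1, d2, h1, h2, hi, hj⟩
      have hd2 : d2 = false := by
        have := (hjfrozen m hm).1
        have := (hjfrozen (m+1) (by omega)).1
        cases d2
        · rfl
        · exfalso; simp at hj; omega
      have hd1 : d1 = false ∨ s = Sum.inr true := by
        cases d1
        · exact Or.inl rfl
        · right
          have hmin := (hjfrozen m hm).2
          have hmin1 := (hjfrozen (m+1) (by omega)).2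
          have : (cfg (m+1)).i = (cfg m).i + 1 := by simpa using hi
          have hge : n + 1 ≤ (cfg m).i := by omega
          rw [← (hsym m hm).1]
          exact tape_ge w _ (by omega)
      have hstat : statStep A s t ((cfg m).p, (cfg m).q) =
          some ((cfg (m+1)).p, (cfg (m+1)).q) := by
        rw [statStep_eq_some_iff]
        refine ⟨d1, d2, ?_, ?_, hd1, hd2⟩
        · rw [← (hsym m hm).1, ← (hsym m hm).2]; exact h1
        · rw [← (hsym m hm).1, ← (hsym m hm).2]; exact h2
      rw [show statIter A s t ((cfg m).p, (cfg m).q) (k+1) =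
        (statStep A s t ((cfg m).p, (cfg m).q)).bind
          (fun pq' => statIter A s t pq' k) from rfl, hstat]
      rw [show m + (k+1) = (m+1) + k from by omega]
      simpa using ih (m+1) (by omega)
  refine ⟨K, cfg K, hcfg K, fun k => ?_⟩
  rw [← hsdef, ← htdef, key k K le_rfl]
  rfl

end WKC

namespace WKC
open WK

variable {α : Type}

lemma bool_of_cond {b b' : Bool} (h : (cond b 1 0 : ℕ) = cond b' 1 0) : b = b' := by
  cases b <;> cases b' <;> simp_all

/-- Any two tape symbols can be realized simultaneously at suitable positions. -/
lemma realize (s t : TSym α) (d2 : Bool) (hside : t = Sum.inr false → d2 = false) :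
    ∃ (w : List α) (i j : ℕ), tape w i = s ∧ tape w j = t ∧ (cond d2 1 0 : ℕ) ≤ j := by
  have hc : ∀ m : ℕ, 1 ≤ m → (cond d2 1 0 : ℕ) ≤ m := by
    intro m hm; cases d2 <;> simp <;> omega
  rcases s with a | bs <;> [skip; rcases bs with _ | _] <;>
    rcases t with b | bt
  · exact ⟨[a, b], 1, 2, by simp [tape_succ], by simp [tape_succ], hc 2 (by omega)⟩
  · rcases bt with _ | _
    · refine ⟨[a], 1, 0, by simp [tape_succ], tape_zero _, ?_⟩
      rw [hside rfl]; simp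
    · exact ⟨[a], 1, 2, by simp [tape_succ], tape_ge _ _ (by simp), hc 2 (by omega)⟩
  · exact ⟨[b], 0, 1, tape_zero _, by simp [tape_succ], hc 1 le_rfl⟩
  · rcases bt with _ | _
    · refine ⟨[], 0, 0, tape_zero _, tape_zero _, ?_⟩
      rw [hside rfl]; simp
    · exact ⟨[], 0, 1, tape_zero _, tape_ge _ _ (by simp), hc 1 le_rfl⟩
  · exact ⟨[b], 2, 1, tape_ge _ _ (by simp), by simp [tape_succ], hc 1 le_rfl⟩
  · rcases bt with _ | _
    · refine ⟨[], 1, 0, tape_ge _ _ (by simp), tape_zero _, ?_⟩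
      rw [hside rfl]; simp
    · exact ⟨[], 1, 1, tape_ge _ _ (by simp), tape_ge _ _ (by simp), hc 1 le_rfl⟩

/-- Pointwise transfer of the reversibility property to the transition functions. -/
lemma transfer (A : DPWK α) (W : RevWitness A) (p : A.Q1) (q : A.Q2) (p' : A.Q1)
    (q' : A.Q2) (d1 d2 : Bool) (s t : TSym α) (hside : t = Sum.inr false → d2 = false) :
    (A.δ1 p s (A.μ2 q t) = some (p', d1) ∧ A.δ2 q t (A.μ1 p s) = some (q', d2)) ↔
    (W.δ'1 p' s (W.μ'2 q' t) = some (p, d1) ∧ W.δ'2 q' t (W.μ'1 p' s) = some (q, d2)) := by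
  obtain ⟨w, i, j, hs, ht, hj⟩ := realize s t d2 hside
  have hstep_iff : Step A w ⟨p, i, q, j⟩ ⟨p', i + cond d1 1 0, q', j - cond d2 1 0⟩ ↔
      (A.δ1 p s (A.μ2 q t) = some (p', d1) ∧ A.δ2 q t (A.μ1 p s) = some (q', d2)) := by
    show (∃ e1 e2 : Bool, A.δ1 p (tape w i) (A.μ2 q (tape w j)) = some (p', e1) ∧
      A.δ2 q (tape w j) (A.μ1 p (tape w i)) = some (q', e2) ∧
      i + cond d1 1 0 = i + cond e1 1 0 ∧ j = (j - cond d2 1 0) + cond e2 1 0) ↔ _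
    rw [hs, ht]
    constructor
    · rintro ⟨e1, e2, h1, h2, hi2, hj2⟩
      obtain rfl : e1 = d1 := bool_of_cond (by omega)
      obtain rfl : e2 = d2 := bool_of_cond (by omega)
      exact ⟨h1, h2⟩
    · rintro ⟨h1, h2⟩
      exact ⟨d1, d2, h1, h2, rfl, by omega⟩
  have hback_iff : BackStep A W.δ'1 W.δ'2 W.μ'1 W.μ'2 w
      ⟨p', i + cond d1 1 0, q', j - cond d2 1 0⟩ ⟨p, i, q, j⟩ ↔
      (W.δ'1 p' s (W.μ'2 q' t) = some (p, d1) ∧ W.δ'2 q' t (W.μ'1 p' s) = some (q, d2)) := by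
    show (∃ e1 e2 : Bool, W.δ'1 p' (tape w i) (W.μ'2 q' (tape w j)) = some (p, e1) ∧
      W.δ'2 q' (tape w j) (W.μ'1 p' (tape w i)) = some (q, e2) ∧
      i + cond d1 1 0 = i + cond e1 1 0 ∧ j = (j - cond d2 1 0) + cond e2 1 0) ↔ _
    rw [hs, ht]
    constructor
    · rintro ⟨e1, e2, h1, h2, hi2, hj2⟩
      obtain rfl : e1 = d1 := bool_of_cond (by omega)
      obtain rfl : e2 = d2 := bool_of_cond (by omega)
      exact ⟨h1, h2⟩
    · rintro ⟨h1, h2⟩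
      exact ⟨d1, d2, h1, h2, rfl, by omega⟩
  rw [← hstep_iff, ← hback_iff]
  exact (W.inverse w ⟨p, i, q, j⟩ ⟨p', i + cond d1 1 0, q', j - cond d2 1 0⟩).symm

end WKC

namespace WKC
open WK

variable {α : Type}

/-! ### The complement machine -/

/-- Composite states: a pair of states of `A` plus a loop-detection flag. -/
abbrev QC (A : DPWK α) : Type := (A.Q1 × A.Q2) × Bool

/-- Is the symbol the right endmarker? -/
def isR : TSym α → Bool
  | Sum.inr true => true
  | _ => false

lemma isR_iff (s : TSym α) : isR s = true ↔ s = Sum.inr true := by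
  rcases s with a | b
  · simp [isR]
  · rcases b with _ | _ <;> simp [isR]

lemma isR_false_iff (s : TSym α) : isR s = false ↔ s ≠ Sum.inr true := by
  rcases s with a | b
  · simp [isR]
  · rcases b with _ | _ <;> simp [isR]

def mkFwd (A : DPWK α) (s : TSym α) :
    Option (A.Q1 × Bool) → Option (A.Q2 × Bool) → Option (QC A × Bool × Bool)
  | some (p', d1), some (q', d2) => some (((p', q'), false), d1 && !(isR s), d2)
  | none, _ => none
  | some _, none => none

open scoped Classical in
noncomputable def fwd0 (A : DPWK α) (s t : TSym α) : QC A → Option (QC A × Bool × Bool)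
  | ((p, q), true) => none
  | ((p, q), false) =>
    if Loop A s t (p, q) then some (((p, q), true), false, false)
    else mkFwd A s (A.δ1 p s (A.μ2 q t)) (A.δ2 q t (A.μ1 p s))

open scoped Classical in
noncomputable def mkBwd (A : DPWK α) (s t : TSym α) :
    Option (A.Q1 × Bool) → Option (A.Q2 × Bool) → Option (QC A × Bool × Bool)
  | some (p, d1), some (q, d2) =>
      if Loop A s t (p, q) then none else some (((p, q), false), d1 && !(isR s), d2)
  | none, _ => none
  | some _, none => none

open scoped Classical in
noncomputable def bwd0 (A : DPWK α) (W : RevWitness A) (s t : TSym α) :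
    QC A → Option (QC A × Bool × Bool)
  | ((p, q), true) => if Loop A s t (p, q) then some (((p, q), false), false, false) else none
  | ((p, q), false) => mkBwd A s t (W.δ'1 p s (W.μ'2 q t)) (W.δ'2 q t (W.μ'1 p s))

open scoped Classical in
noncomputable def fwdT (A : DPWK α) (s t : TSym α) (u v : QC A) :
    Option (QC A × Bool × Bool) :=
  if u = v then fwd0 A s t u else none

open scoped Classical in
noncomputable def bwdT (A : DPWK α) (W : RevWitness A) (s t : TSym α) (u v : QC A) :
    Option (QC A × Bool × Bool) :=
  if u = v then bwd0 A W s t u else none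

/-- The complement machine. -/
noncomputable def compM (A : DPWK α) [Fintype α] : DPWK α where
  M := (TSym α × QC A) ⊕ (TSym α × QC A)
  Q1 := QC A
  Q2 := QC A
  fM := by letI := A.fQ1; letI := A.fQ2; exact inferInstance
  fQ1 := by letI := A.fQ1; letI := A.fQ2; exact inferInstance
  fQ2 := by letI := A.fQ1; letI := A.fQ2; exact inferInstance
  δ1 := fun u s m => match m with
    | some (Sum.inr (t, v)) => (fwdT A s t u v).map (fun r => (r.1, r.2.1))
    | _ => none
  δ2 := fun v t m => match m with
    | some (Sum.inl (s, u)) => (fwdT A s t u v).map (fun r => (r.1, r.2.2))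
    | _ => none
  μ1 := fun u s => some (Sum.inl (s, u))
  μ2 := fun v t => some (Sum.inr (t, v))
  q01 := ((A.q01, A.q02), false)
  q02 := ((A.q01, A.q02), false)
  F1 := {u : QC A | u.2 = true ∨ (u.1.1 ∉ A.F1 ∧ u.1.2 ∉ A.F2)}
  F2 := ∅

variable [Fintype α]

lemma compM_δ1_eq (A : DPWK α) (u : QC A) (s t : TSym α) (v : QC A) :
    (compM A).δ1 u s ((compM A).μ2 v t) = (fwdT A s t u v).map (fun r => (r.1, r.2.1)) := rfl

lemma compM_δ2_eq (A : DPWK α) (v : QC A) (t s : TSym α) (u : QC A) :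
    (compM A).δ2 v t ((compM A).μ1 u s) = (fwdT A s t u v).map (fun r => (r.1, r.2.2)) := rfl

/-- Characterization of forward steps of the complement machine. -/
lemma stepC_iff (A : DPWK α) (w : List α) (c c' : Config (compM A)) :
    Step (compM A) w c c' ↔ ∃ r : QC A × Bool × Bool,
      fwdT A (tape w c.i) (tape w c.j) c.p c.q = some r ∧
      c'.p = r.1 ∧ c'.q = r.1 ∧
      c'.i = c.i + cond r.2.1 1 0 ∧ c.j = c'.j + cond r.2.2 1 0 := by
  unfold Step
  rw [compM_δ1_eq A c.p (tape w c.i) (tape w c.j) c.q,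
    compM_δ2_eq A c.q (tape w c.j) (tape w c.i) c.p]
  constructor
  · rintro ⟨d1, d2, h1, h2, hi, hj⟩
    rcases Option.map_eq_some_iff.mp h1 with ⟨r, hr, hr1⟩
    rcases Option.map_eq_some_iff.mp h2 with ⟨r2, hr2, hr22⟩
    rw [hr] at hr2
    obtain rfl := Option.some.inj hr2
    obtain ⟨hp, hd1⟩ := Prod.mk.injEq _ _ _ _ ▸ hr1
    obtain ⟨hq, hd2⟩ := Prod.mk.injEq _ _ _ _ ▸ hr22
    exact ⟨r, hr, hp.symm, hq.symm, by rw [← hd1] at hi; exact hi,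
      by rw [← hd2] at hj; exact hj⟩
  · rintro ⟨r, hr, hp, hq, hi, hj⟩
    exact ⟨r.2.1, r.2.2, Option.map_eq_some_iff.mpr ⟨r, hr, by rw [hp]; rfl⟩,
      Option.map_eq_some_iff.mpr ⟨r, hr, by rw [hq]; rfl⟩, hi, hj⟩

/-- Characterization of backward steps of the complement machine. -/
lemma backC_iff (A : DPWK α) (W : RevWitness A) (w : List α) (c' c : Config (compM A)) :
    BackStep (compM A)
      (fun u s m => match m with
        | some (Sum.inr (t, v)) => (bwdT A W s t u v).map (fun r => (r.1, r.2.1))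
        | _ => none)
      (fun v t m => match m with
        | some (Sum.inl (s, u)) => (bwdT A W s t u v).map (fun r => (r.1, r.2.2))
        | _ => none)
      (fun u s => some (Sum.inl (s, u)))
      (fun v t => some (Sum.inr (t, v))) w c' c ↔
    ∃ r : QC A × Bool × Bool,
      bwdT A W (tape w c.i) (tape w c.j) c'.p c'.q = some r ∧
      c.p = r.1 ∧ c.q = r.1 ∧
      c'.i = c.i + cond r.2.1 1 0 ∧ c.j = c'.j + cond r.2.2 1 0 := by
  unfold BackStep
  constructor
  · rintro ⟨d1, d2, h1, h2, hi, hj⟩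
    rcases Option.map_eq_some_iff.mp h1 with ⟨r, hr, hr1⟩
    rcases Option.map_eq_some_iff.mp h2 with ⟨r2, hr2, hr22⟩
    rw [hr] at hr2
    obtain rfl := Option.some.inj hr2
    obtain ⟨hp, hd1⟩ := Prod.mk.injEq _ _ _ _ ▸ hr1
    obtain ⟨hq, hd2⟩ := Prod.mk.injEq _ _ _ _ ▸ hr22
    exact ⟨r, hr, hp.symm, hq.symm, by rw [← hd1] at hi; exact hi,
      by rw [← hd2] at hj; exact hj⟩
  · rintro ⟨r, hr, hp, hq, hi, hj⟩
    exact ⟨r.2.1, r.2.2, Option.map_eq_some_iff.mpr ⟨r, hr, by rw [hp]⟩,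
      Option.map_eq_some_iff.mpr ⟨r, hr, by rw [hq]⟩, hi, hj⟩

end WKC

namespace WKC
open WK

variable {α : Type} [Fintype α]

lemma cond_eq_zero_iff {d : Bool} : (cond d 1 0 : ℕ) = 0 ↔ d = false := by
  cases d <;> simp

/-- The reversibility witness for the complement machine. -/
noncomputable def compWitness (A : DPWK α) (W : RevWitness A) : RevWitness (compM A) where
  δ'1 := fun u s m => match m with
    | some (Sum.inr (t, v)) => (bwdT A W s t u v).map (fun r => (r.1, r.2.1))
    | _ => none
  δ'2 := fun v t m => match m with
    | some (Sum.inl (s, u)) => (bwdT A W s t u v).map (fun r => (r.1, r.2.2))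
    | _ => none
  μ'1 := fun u s => some (Sum.inl (s, u))
  μ'2 := fun v t => some (Sum.inr (t, v))
  inverse := by
    classical
    intro w c c'
    rw [backC_iff A W w c' c, stepC_iff A w c c']
    set s := tape w c.i with hs
    set t := tape w c.j with ht
    constructor
    · rintro ⟨r, hr, hp, hq, hi, hj⟩
      by_cases hsync : c'.p = c'.q
      swap
      · unfold bwdT at hr; rw [if_neg (show ¬ @Eq (QC A) c'.p c'.q from hsync)] at hr
        exact nomatch hr
      unfold bwdT at hr; rw [if_pos (show @Eq (QC A) c'.p c'.q from hsync)] at hr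
      rcases hu : c'.p with ⟨⟨p', q'⟩, fl⟩
      rw [hu] at hr
      rcases fl with _ | _
      · -- backward over a normal step
        simp only [bwd0] at hr
        rcases h1 : W.δ'1 p' s (W.μ'2 q' t) with _ | ⟨p0, d1⟩ <;> rw [h1] at hr
        · exact nomatch hr
        rcases h2 : W.δ'2 q' t (W.μ'1 p' s) with _ | ⟨q0, d2⟩ <;> rw [h2] at hr
        · exact nomatch hr
        have hr' : (if Loop A s t (p0, q0) then none
            else some ((((p0, q0), false) : QC A), d1 && !(isR s), d2)) = some r := hr
        by_cases hL : Loop A s t (p0, q0)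
        · rw [if_pos hL] at hr'
          exact nomatch hr'
        rw [if_neg hL] at hr'
        obtain rfl := Option.some.inj hr'
        have hj' : c.j = c'.j + cond d2 1 0 := hj
        have hside : t = Sum.inr false → d2 = false := by
          intro h0
          have hcj : c.j = 0 := (tape_eq_inr_false_iff w c.j).mp (by rw [← ht, h0])
          rw [hcj] at hj'
          exact cond_eq_zero_iff.mp (by omega)
        obtain ⟨hA1, hA2⟩ := (transfer A W p0 q0 p' q' d1 d2 s t hside).mpr ⟨h1, h2⟩
        refine ⟨(((p', q'), false), d1 && !(isR s), d2), ?_, rfl, ?_, hi, hj⟩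
        · have hcp : c.p = ((p0, q0), false) := hp
          have hcq : c.q = ((p0, q0), false) := hq
          unfold fwdT; rw [hcp, hcq, if_pos rfl]
          simp only [fwd0, if_neg hL, hA1, hA2, mkFwd]
        · rw [← hsync]
          exact hu
      · -- backward over a flag-setting step
        simp only [bwd0] at hr
        by_cases hL : Loop A s t (p', q')
        · rw [if_pos hL] at hr
          obtain rfl := Option.some.inj hr
          refine ⟨(((p', q'), true), false, false), ?_, rfl, ?_, hi, hj⟩
          · have hcp : c.p = ((p', q'), false) := hp
            have hcq : c.q = ((p', q'), false) := hq
            unfold fwdT; rw [hcp, hcq, if_pos rfl]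
            simp only [fwd0, if_pos hL]
          · rw [← hsync]
            exact hu
        · rw [if_neg hL] at hr
          exact nomatch hr
    · rintro ⟨r, hr, hp, hq, hi, hj⟩
      by_cases hsync : c.p = c.q
      swap
      · unfold fwdT at hr; rw [if_neg (show ¬ @Eq (QC A) c.p c.q from hsync)] at hr
        exact nomatch hr
      unfold fwdT at hr; rw [if_pos (show @Eq (QC A) c.p c.q from hsync)] at hr
      rcases hu : c.p with ⟨⟨p, q⟩, fl⟩
      rw [hu] at hr
      rcases fl with _ | _
      · simp only [fwd0] at hr
        by_cases hL : Loop A s t (p, q)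
        · -- flag-setting step
          rw [if_pos hL] at hr
          obtain rfl := Option.some.inj hr
          refine ⟨(((p, q), false), false, false), ?_, rfl, ?_, hi, hj⟩
          · have hcp : c'.p = ((p, q), true) := hp
            have hcq : c'.q = ((p, q), true) := hq
            unfold bwdT; rw [hcp, hcq, if_pos rfl]
            simp only [bwd0, if_pos hL]
          · rw [← hsync]
            exact hu
        · -- normal step
          rw [if_neg hL] at hr
          rcases h1 : A.δ1 p s (A.μ2 q t) with _ | ⟨p', d1⟩ <;> rw [h1] at hr
          · exact nomatch hr
          rcases h2 : A.δ2 q t (A.μ1 p s) with _ | ⟨q', d2⟩ <;> rw [h2] at hr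
          · exact nomatch hr
          have hr' : some ((((p', q'), false) : QC A), d1 && !(isR s), d2) = some r := hr
          obtain rfl := Option.some.inj hr'
          have hj' : c.j = c'.j + cond d2 1 0 := hj
          have hside : t = Sum.inr false → d2 = false := by
            intro h0
            have hcj : c.j = 0 := (tape_eq_inr_false_iff w c.j).mp (by rw [← ht, h0])
            rw [hcj] at hj'
            exact cond_eq_zero_iff.mp (by omega)
          obtain ⟨hB1, hB2⟩ := (transfer A W p q p' q' d1 d2 s t hside).mp ⟨h1, h2⟩
          refine ⟨(((p, q), false), d1 && !(isR s), d2), ?_, rfl, ?_, hi, hj⟩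
          · have hcp : c'.p = ((p', q'), false) := hp
            have hcq : c'.q = ((p', q'), false) := hq
            unfold bwdT; rw [hcp, hcq, if_pos rfl]
            simp only [bwd0, hB1, hB2, mkBwd, if_neg hL]
          · rw [← hsync]
            exact hu
      · exact nomatch hr

end WKC

namespace WKC
open WK

variable {α : Type} [Fintype α]

/-- Embedding of configurations of `A` into configurations of the complement machine. -/
def phi (A : DPWK α) (w : List α) (c : Config A) : Config (compM A) :=
  ⟨((c.p, c.q), false), min c.i (w.length + 1), ((c.p, c.q), false), c.j⟩

/-- The halting accepting configuration reached upon loop detection. -/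
def flagC (A : DPWK α) (w : List α) (c : Config A) : Config (compM A) :=
  ⟨((c.p, c.q), true), min c.i (w.length + 1), ((c.p, c.q), true), c.j⟩

lemma compM_q01 (A : DPWK α) : (compM A).q01 = ((A.q01, A.q02), false) := rfl
lemma compM_q02 (A : DPWK α) : (compM A).q02 = ((A.q01, A.q02), false) := rfl
lemma compM_F1 (A : DPWK α) :
    (compM A).F1 = {u : QC A | u.2 = true ∨ (u.1.1 ∉ A.F1 ∧ u.1.2 ∉ A.F2)} := rfl
lemma compM_F2 (A : DPWK α) : (compM A).F2 = (∅ : Set (QC A)) := rfl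

lemma phi_init (A : DPWK α) (w : List α) :
    phi A w (initConf A w) = initConf (compM A) w := by
  unfold phi initConf
  rw [compM_q01, compM_q02]
  simp

lemma min_move (w : List α) (i : ℕ) (d1 : Bool) :
    min (i + cond d1 1 0) (w.length + 1) =
      min i (w.length + 1) + cond (d1 && !(isR (tape w i))) 1 0 := by
  cases d1
  · simp
  · by_cases hR : w.length + 1 ≤ i
    · rw [show isR (tape w i) = true from by rw [tape_ge w i hR]; rfl]
      simp only [Bool.not_true, Bool.and_false, cond_false, Nat.add_zero]
      omega
    · rw [show isR (tape w i) = false from (isR_false_iff _).mpr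
        (fun hh => hR ((tape_eq_inr_true_iff w i).mp hh))]
      have hlt : ¬ (w.length + 1 ≤ i) := hR
      simp only [Bool.not_false, Bool.and_true, cond_true]
      omega

lemma accConf_phi_iff (A : DPWK α) (w : List α) (c : Config A) :
    AccConf (compM A) (phi A w c) ↔ ¬ AccConf A c := by
  unfold AccConf
  show (((c.p, c.q), false) ∈ (compM A).F1 ∨ ((c.p, c.q), false) ∈ (compM A).F2) ↔ _
  rw [compM_F1, compM_F2]
  change (((c.p, c.q), false) ∈ {u : QC A | u.2 = true ∨ (u.1.1 ∉ A.F1 ∧ u.1.2 ∉ A.F2)} ∨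
    ((c.p, c.q), false) ∈ (∅ : Set (QC A))) ↔ _
  simp only [Set.mem_setOf_eq, Set.mem_empty_iff_false, or_false]
  constructor
  · rintro (h | ⟨h1, h2⟩)
    · exact absurd h (by simp)
    · rintro (h | h)
      · exact h1 h
      · exact h2 h
  · intro h
    exact Or.inr ⟨fun h1 => h (Or.inl h1), fun h2 => h (Or.inr h2)⟩

lemma accConf_flagC (A : DPWK α) (w : List α) (c : Config A) :
    AccConf (compM A) (flagC A w c) := by
  unfold AccConf
  left
  show ((c.p, c.q), true) ∈ (compM A).F1
  rw [compM_F1]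
  exact Or.inl rfl

/-- Simulation of a normal step. -/
lemma simM1 (A : DPWK α) (w : List α) (c c' : Config A)
    (hA : stepFn A w c = some c')
    (hnl : ¬ Loop A (tape w c.i) (tape w c.j) (c.p, c.q)) :
    stepFn (compM A) w (phi A w c) = some (phi A w c') := by
  rw [← step_iff_stepFn, stepC_iff]
  obtain ⟨d1, d2, h1, h2, hi, hj⟩ := (step_iff_stepFn A w c c').mpr hA
  refine ⟨(((c'.p, c'.q), false), d1 && !(isR (tape w c.i)), d2), ?_, rfl, rfl, ?_, ?_⟩
  · show fwdT A (tape w (min c.i (w.length + 1))) (tape w c.j)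
      ((c.p, c.q), false) ((c.p, c.q), false) = _
    rw [tape_min, fwdT, if_pos rfl]
    simp only [fwd0, if_neg hnl, h1, h2, mkFwd]
  · show min c'.i (w.length + 1) =
      min c.i (w.length + 1) + cond (d1 && !(isR (tape w c.i))) 1 0
    rw [hi, min_move]
  · exact hj

/-- Simulation of halting. -/
lemma simM2 (A : DPWK α) (w : List α) (c : Config A)
    (hA : stepFn A w c = none)
    (hnl : ¬ Loop A (tape w c.i) (tape w c.j) (c.p, c.q)) :
    stepFn (compM A) w (phi A w c) = none := by
  rcases hS : stepFn (compM A) w (phi A w c) with _ | C'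
  · rfl
  exfalso
  obtain ⟨r, hr, hp, hq, hi, hj⟩ := (stepC_iff A w (phi A w c) C').mp
    ((step_iff_stepFn _ w _ C').mpr hS)
  have hr2 : fwdT A (tape w c.i) (tape w c.j) ((c.p, c.q), false) ((c.p, c.q), false)
      = some r := by
    have : fwdT A (tape w (min c.i (w.length + 1))) (tape w c.j)
        ((c.p, c.q), false) ((c.p, c.q), false) = some r := hr
    rwa [tape_min] at this
  rw [fwdT, if_pos rfl] at hr2
  simp only [fwd0, if_neg hnl] at hr2
  unfold stepFn at hA
  rcases h1 : A.δ1 c.p (tape w c.i) (A.μ2 c.q (tape w c.j)) with _ | ⟨p', d1⟩ <;>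
    rw [h1] at hA hr2
  · exact nomatch hr2
  rcases h2 : A.δ2 c.q (tape w c.j) (A.μ1 c.p (tape w c.i)) with _ | ⟨q', d2⟩ <;>
    rw [h2] at hA hr2
  · exact nomatch hr2
  have hr3 : some ((((p', q'), false) : QC A), d1 && !(isR (tape w c.i)), d2) = some r := hr2
  obtain rfl := Option.some.inj hr3
  have hj' : c.j = C'.j + cond d2 1 0 := hj
  have hguard : (cond d2 1 0 : ℕ) ≤ c.j := by omega
  rw [show mkStep A (some (p', d1)) (some (q', d2)) c.i c.j =
    some ⟨p', c.i + cond d1 1 0, q', c.j - cond d2 1 0⟩ from by simp [mkStep, hguard]] at hA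
  exact nomatch hA

/-- Simulation of loop detection. -/
lemma simM3 (A : DPWK α) (w : List α) (c : Config A)
    (hL : Loop A (tape w c.i) (tape w c.j) (c.p, c.q)) :
    stepFn (compM A) w (phi A w c) = some (flagC A w c) := by
  rw [← step_iff_stepFn, stepC_iff]
  refine ⟨(((c.p, c.q), true), false, false), ?_, rfl, rfl, ?_, ?_⟩
  · show fwdT A (tape w (min c.i (w.length + 1))) (tape w c.j)
      ((c.p, c.q), false) ((c.p, c.q), false) = _
    rw [tape_min, fwdT, if_pos rfl]
    simp only [fwd0, if_pos hL]
  · show min c.i (w.length + 1) = min c.i (w.length + 1) + cond false 1 0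
    simp
  · show c.j = c.j + cond false 1 0
    simp

/-- A flagged configuration is halting. -/
lemma flagC_halt (A : DPWK α) (w : List α) (c : Config A) :
    stepFn (compM A) w (flagC A w c) = none := by
  rcases hS : stepFn (compM A) w (flagC A w c) with _ | C'
  · rfl
  exfalso
  obtain ⟨r, hr, _, _, _, _⟩ := (stepC_iff A w (flagC A w c) C').mp
    ((step_iff_stepFn _ w _ C').mpr hS)
  have hr2 : fwdT A (tape w (min c.i (w.length + 1))) (tape w c.j)
      ((c.p, c.q), true) ((c.p, c.q), true) = some r := hr
  rw [fwdT, if_pos rfl] at hr2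
  simp only [fwd0] at hr2
  exact nomatch hr2

/-- On a loop configuration the machine `A` can always step. -/
lemma stepFn_ne_none_of_loop (A : DPWK α) (w : List α) (c : Config A)
    (hL : Loop A (tape w c.i) (tape w c.j) (c.p, c.q)) :
    stepFn A w c ≠ none := by
  obtain ⟨c1, hc1, -, -, -⟩ := loop_invariant A w c hL 1
  intro h
  rw [seqFrom_succ_left, h] at hc1
  exact nomatch hc1

lemma seqFrom_none_mono (A : DPWK α) (w : List α) (c : Config A) {a b : ℕ}
    (hab : a ≤ b) (ha : seqFrom A w c a = none) : seqFrom A w c b = none := by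
  obtain ⟨d, rfl⟩ : ∃ d, b = a + d := ⟨b - a, by omega⟩
  rw [seqFrom_add, ha]
  rfl

/-- Simulation of the run of `A` by the complement machine, as long as no loop occurred. -/
lemma sim_upto (A : DPWK α) (w : List α) (k : ℕ)
    (hok : ∀ m, m < k → ∀ cm, runSeq A w m = some cm →
      ¬ Loop A (tape w cm.i) (tape w cm.j) (cm.p, cm.q)) :
    ∀ m, m ≤ k → ∀ cm, runSeq A w m = some cm →
      runSeq (compM A) w m = some (phi A w cm) := by
  intro m
  induction m with
  | zero =>
    intro _ cm hcm
    obtain rfl : initConf A w = cm := Option.some.inj hcm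
    show some (initConf (compM A) w) = _
    rw [phi_init]
  | succ m ih =>
    intro hm cm hcm
    rw [runSeq, seqFrom_succ_right] at hcm
    rcases hprev : seqFrom A w (initConf A w) m with _ | cp
    · rw [hprev] at hcm
      exact nomatch hcm
    rw [hprev] at hcm
    simp only [Option.bind_some] at hcm
    have hprev' : runSeq A w m = some cp := hprev
    have hC := ih (by omega) cp hprev'
    have hnl := hok m (by omega) cp hprev'
    rw [runSeq, seqFrom_succ_right, ← runSeq, hC]
    simp only [Option.bind_some]
    rw [simM1 A w cp cm hcm hnl]

end WKC

namespace WKC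
open WK

variable {α : Type} [Fintype α]

/-- The complement machine accepts exactly the complement language. -/
lemma lang_compM (A : DPWK α) : lang (compM A) = (lang A)ᶜ := by
  classical
  ext w
  simp only [lang, Set.mem_setOf_eq, Set.mem_compl_iff]
  rw [accepts_iff, accepts_iff]
  by_cases hhalts : ∃ k c, runSeq A w k = some c ∧ stepFn A w c = none
  · obtain ⟨k, ck, hk, hhalt⟩ := hhalts
    have hnl : ∀ m cm, runSeq A w m = some cm →
        ¬ Loop A (tape w cm.i) (tape w cm.j) (cm.p, cm.q) := by
      intro m cm hm hL
      rcases le_or_gt m k with hmk | hmk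
      · obtain ⟨cd, hcd, hsd, htd, hLd⟩ := loop_invariant A w cm hL (k - m)
        have hkd := seqFrom_add A w (initConf A w) m (k - m)
        rw [show m + (k - m) = k from by omega] at hkd
        have hck' : runSeq A w k = some cd := by
          rw [runSeq, hkd, show seqFrom A w (initConf A w) m = some cm from hm]
          simpa using hcd
        obtain rfl : cd = ck := by rw [hck'] at hk; exact Option.some.inj hk
        rw [← hsd, ← htd] at hLd
        exact stepFn_ne_none_of_loop A w cd hLd hhalt
      · have h1 : runSeq A w (k+1) = none := by
          rw [runSeq, seqFrom_succ_right, ← runSeq, hk]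
          simp [hhalt]
        have h2 : runSeq A w m = none := seqFrom_none_mono A w _ (by omega) h1
        rw [h2] at hm
        exact nomatch hm
    have hsim := sim_upto A w k (fun m _ cm hm => hnl m cm hm)
    have hCk : runSeq (compM A) w k = some (phi A w ck) := hsim k le_rfl ck hk
    have hChalt : stepFn (compM A) w (phi A w ck) = none := simM2 A w ck hhalt (hnl k ck hk)
    have huniqA : ∀ k2 c2, runSeq A w k2 = some c2 → stepFn A w c2 = none →
        k2 = k ∧ c2 = ck := by
      intro k2 c2 h2 hh2
      rcases lt_trichotomy k2 k with h | h | h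
      · exfalso
        have hno : runSeq A w (k2+1) = none := by
          rw [runSeq, seqFrom_succ_right, ← runSeq, h2]
          simp [hh2]
        obtain ⟨c3, hc3⟩ := seqFrom_some_of_le A w (initConf A w) (show k2+1 ≤ k by omega) hk
        rw [runSeq] at hno
        rw [hno] at hc3
        exact nomatch hc3
      · subst h
        rw [h2] at hk
        exact ⟨rfl, Option.some.inj hk⟩
      · exfalso
        have hno : runSeq A w (k+1) = none := by
          rw [runSeq, seqFrom_succ_right, ← runSeq, hk]
          simp [hhalt]
        have h3 := seqFrom_none_mono A w (initConf A w) (show k+1 ≤ k2 by omega) hno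
        rw [runSeq] at h2
        rw [h3] at h2
        exact nomatch h2
    constructor
    · rintro ⟨k2, c2, hk2, hh2, hacc2⟩
      have hkek : k2 = k ∧ c2 = phi A w ck := by
        rcases lt_trichotomy k2 k with h | h | h
        · obtain ⟨c2A, hc2A⟩ := seqFrom_some_of_le A w (initConf A w) (le_of_lt h) hk
          have hc2A' : runSeq A w k2 = some c2A := hc2A
          have hsimk2 := hsim k2 (le_of_lt h) c2A hc2A'
          obtain rfl : c2 = phi A w c2A := by
            rw [hsimk2] at hk2
            exact (Option.some.inj hk2).symm
          rcases hs2 : stepFn A w c2A with _ | c3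
          · obtain ⟨rfl, _⟩ := huniqA k2 c2A hc2A' hs2
            omega
          · exfalso
            have := simM1 A w c2A c3 hs2 (hnl k2 c2A hc2A')
            rw [hh2] at this
            exact nomatch this
        · subst h
          rw [hCk] at hk2
          exact ⟨rfl, (Option.some.inj hk2).symm⟩
        · exfalso
          have hno : runSeq (compM A) w (k+1) = none := by
            rw [runSeq, seqFrom_succ_right, ← runSeq, hCk]
            simp [hChalt]
          have h3 := seqFrom_none_mono (compM A) w (initConf (compM A) w)
            (show k+1 ≤ k2 by omega) hno
          rw [runSeq] at hk2
          rw [h3] at hk2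
          exact nomatch hk2
      obtain ⟨rfl, rfl⟩ := hkek
      have hnacc := (accConf_phi_iff A w ck).mp hacc2
      rintro ⟨k3, c3, hk3, hh3, hacc3⟩
      obtain ⟨rfl, rfl⟩ := huniqA k3 c3 hk3 hh3
      exact hnacc hacc3
    · intro hnA
      refine ⟨k, phi A w ck, hCk, hChalt, ?_⟩
      rw [accConf_phi_iff]
      intro hacc
      exact hnA ⟨k, ck, hk, hhalt, hacc⟩
  · push_neg at hhalts
    have hall : ∀ k, ∃ c, runSeq A w k = some c := by
      intro k
      induction k with
      | zero => exact ⟨initConf A w, rfl⟩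
      | succ k ih =>
        obtain ⟨c, hc⟩ := ih
        rcases hs : stepFn A w c with _ | c'
        · exact absurd hs (hhalts k c hc)
        · refine ⟨c', ?_⟩
          rw [runSeq, seqFrom_succ_right, ← runSeq, hc]
          simp [hs]
    have hnA : ¬ ∃ k, ∃ c, runSeq A w k = some c ∧ stepFn A w c = none ∧ AccConf A c := by
      rintro ⟨k, c, h1, h2, -⟩
      exact hhalts k c h1 h2
    refine iff_of_true ?_ hnA
    obtain ⟨K, cK, hK, hLK⟩ := loop_of_no_halt A w hall
    have hEx : ∃ m, ∃ cm, runSeq A w m = some cm ∧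
        Loop A (tape w cm.i) (tape w cm.j) (cm.p, cm.q) := ⟨K, cK, hK, hLK⟩
    obtain ⟨c0, hc0, hL0⟩ := Nat.find_spec hEx
    have hok : ∀ m, m < Nat.find hEx → ∀ cm, runSeq A w m = some cm →
        ¬ Loop A (tape w cm.i) (tape w cm.j) (cm.p, cm.q) :=
      fun m hm cm hcm hL => Nat.find_min hEx hm ⟨cm, hcm, hL⟩
    have hsim0 : runSeq (compM A) w (Nat.find hEx) = some (phi A w c0) :=
      sim_upto A w (Nat.find hEx) hok (Nat.find hEx) le_rfl c0 hc0
    refine ⟨Nat.find hEx + 1, flagC A w c0, ?_, flagC_halt A w c0, accConf_flagC A w c0⟩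
    rw [runSeq, seqFrom_succ_right, ← runSeq, hsim0]
    simp [simM3 A w c0 hL0]

end WKC

open WK in
/-- The family of languages accepted by reversible deterministic
two-party Watson-Crick systems is closed under complementation. -/
theorem REV_PWK_closed_complement (α : Type) [Fintype α] (L : Set (List α)) :
    L ∈ RevPWKLangs α → Lᶜ ∈ RevPWKLangs α := by
  rintro ⟨A, hRev, rfl⟩
  obtain ⟨W⟩ := hRev
  exact ⟨WKC.compM A, ⟨WKC.compWitness A W⟩, WKC.lang_compM A⟩
end

section
/- The family of languages accepted by reversible deterministic two-party Watson-Crick systems is closed under reversal. -/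
namespace WK

set_option linter.dupNamespace false

variable {α : Type}

/-- Swap the two endmarkers, keep letters. -/
def eS : TSym α → TSym α
  | Sum.inl a => Sum.inl a
  | Sum.inr b => Sum.inr (!b)

@[simp] lemma eS_eS (s : TSym α) : eS (eS s) = s := by
  rcases s with a | b
  · rfl
  · cases b <;> rfl

def isR : TSym α → Bool
  | Sum.inr true => true
  | _ => false

def isL : TSym α → Bool
  | Sum.inr false => true
  | _ => false

@[simp] lemma isR_eS (s : TSym α) : isR (eS s) = isL s := by
  rcases s with a | b
  · rfl
  · cases b <;> rfl

@[simp] lemma isL_eS (s : TSym α) : isL (eS s) = isR s := by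
  rcases s with a | b
  · rfl
  · cases b <;> rfl

/-- "force no-move" guard. -/
def gF {Q : Type} (b : Bool) (o : Option (Q × Bool)) : Option (Q × Bool) :=
  o.map fun x => (x.1, !b && x.2)

/-- "kill move" guard. -/
def gN {Q : Type} (b : Bool) (o : Option (Q × Bool)) : Option (Q × Bool) :=
  match o with
  | some (q, d) => if b && d then none else some (q, d)
  | none => none

lemma gF_eq_some {Q : Type} {b : Bool} {o : Option (Q × Bool)} {q : Q} {d : Bool} :
    gF b o = some (q, d) ↔ ∃ d0, o = some (q, d0) ∧ d = (!b && d0) := by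
  cases o with
  | none => simp [gF]
  | some x =>
    obtain ⟨q0, d0⟩ := x
    simp only [gF, Option.map_some, Option.some.injEq, Prod.mk.injEq]
    constructor
    · rintro ⟨rfl, rfl⟩; exact ⟨d0, ⟨rfl, rfl⟩, rfl⟩
    · rintro ⟨d1, ⟨rfl, rfl⟩, rfl⟩; exact ⟨rfl, rfl⟩

lemma gN_eq_some {Q : Type} {b : Bool} {o : Option (Q × Bool)} {q : Q} {d : Bool} :
    gN b o = some (q, d) ↔ o = some (q, d) ∧ (b && d) = false := by
  cases o with
  | none => simp [gN]
  | some x =>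
    obtain ⟨q0, d0⟩ := x
    cases b <;> cases d0 <;> cases d <;> simp [gN] <;> aesop

lemma gF_some {Q : Type} (b : Bool) (q : Q) (d : Bool) :
    gF b (some (q, d)) = some (q, !b && d) := rfl

lemma gN_some {Q : Type} {b : Bool} (q : Q) {d : Bool} (h : (b && d) = false) :
    gN b (some (q, d)) = some (q, d) := by simp [gN, h]


lemma tape_zero (w : List α) : tape w 0 = Sum.inr false := rfl

lemma tape_large (w : List α) (k : ℕ) (h : w.length + 1 ≤ k) : tape w k = Sum.inr true := by
  unfold tape
  rw [List.getD_eq_getElem?_getD]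
  have hlen : (Sum.inr false :: w.map Sum.inl : List (TSym α)).length = w.length + 1 := by simp
  rw [List.getElem?_append_right (by omega)]
  rcases eq_or_lt_of_le h with heq | hlt
  · subst heq; simp [hlen]
  · rw [List.getElem?_eq_none (by simp [hlen]; omega)]
    rfl

lemma tape_mid (w : List α) (k : ℕ) (h0 : k ≠ 0) (h : k - 1 < w.length) :
    tape w k = Sum.inl (w[k-1]'h) := by
  obtain ⟨m, rfl⟩ : ∃ m, k = m + 1 := ⟨k - 1, by omega⟩
  unfold tape
  rw [List.getD_eq_getElem?_getD]
  rw [List.getElem?_append_left (by simp; omega)]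
  simp only [List.getElem?_cons_succ, List.getElem?_map]
  have hm : m < w.length := by omega
  rw [List.getElem?_eq_getElem hm]
  rfl

lemma isL_tape_iff (w : List α) (k : ℕ) : isL (tape w k) = true ↔ k = 0 := by
  constructor
  · intro h
    by_contra h0
    by_cases hk : k - 1 < w.length
    · rw [tape_mid w k h0 hk] at h; simp [isL] at h
    · rw [tape_large w k (by omega)] at h; simp [isL] at h
  · rintro rfl; rw [tape_zero]; rfl

lemma isR_tape_iff (w : List α) (k : ℕ) : isR (tape w k) = true ↔ w.length + 1 ≤ k := by
  constructor
  · intro h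
    by_contra h0
    rcases Nat.eq_zero_or_pos k with rfl | hk
    · rw [tape_zero] at h; simp [isR] at h
    · rw [tape_mid w k (by omega) (by omega)] at h; simp [isR] at h
  · intro h; rw [tape_large w k h]; rfl

lemma tape_rev (w : List α) (k : ℕ) :
    tape w.reverse k = eS (tape w (w.length + 1 - k)) := by
  rcases Nat.eq_zero_or_pos k with rfl | hk
  · rw [tape_zero, Nat.sub_zero, tape_large w _ le_rfl]; rfl
  rcases le_or_gt k w.length with hle | hgt
  · have h1 : k - 1 < w.reverse.length := by simp; omega
    have h2 : w.length + 1 - k - 1 < w.length := by omega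
    rw [tape_mid w.reverse k (by omega) h1, tape_mid w _ (by omega) h2]
    rw [List.getElem_reverse]
    simp only [eS]
    have hidx : w.length - 1 - (k - 1) = w.length + 1 - k - 1 := by omega
    simp only [hidx]
  · rw [tape_large w.reverse k (by simp; omega)]
    have : w.length + 1 - k = 0 := by omega
    rw [this, tape_zero]; rfl

lemma tape_rev' (w : List α) (k : ℕ) :
    tape w (w.length + 1 - k) = eS (tape w.reverse k) := by
  rw [tape_rev, eS_eS]

lemma tape_rev'' (w : List α) (k : ℕ) (h : k ≤ w.length + 1) :
    tape w.reverse (w.length + 1 - k) = eS (tape w k) := by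
  rw [tape_rev]
  congr 2
  omega

/-- The mirrored machine: components swapped, endmarkers swapped, with guards
ensuring that the upper head never moves beyond the right endmarker and the
lower head never tries to move beyond the left endmarker. -/
def mir (A : DPWK α) : DPWK α where
  M := A.M
  Q1 := A.Q2
  Q2 := A.Q1
  fM := A.fM
  fQ1 := A.fQ2
  fQ2 := A.fQ1
  δ1 := fun q s m => gN (isR s) (A.δ2 q (eS s) m)
  δ2 := fun p s m => gF (isL s) (A.δ1 p (eS s) m)
  μ1 := fun q s => A.μ2 q (eS s)
  μ2 := fun p s => A.μ1 p (eS s)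
  q01 := A.q02
  q02 := A.q01
  F1 := A.F2
  F2 := A.F1

/-- The normalized machine: the upper component never moves while reading the
right endmarker. -/
def nrm (A : DPWK α) : DPWK α :=
  { A with δ1 := fun p s m => gF (isR s) (A.δ1 p s m) }

/-- A gadget word containing the (at most two) letters among `t1`, `t2`. -/
def symL : TSym α → List α
  | Sum.inl a => [a]
  | Sum.inr _ => []

def gw (t1 t2 : TSym α) : List α := symL t1 ++ symL t2

def pU (t1 t2 : TSym α) : ℕ :=
  match t1 with
  | Sum.inr false => 0
  | Sum.inl _ => 1
  | Sum.inr true => (gw t1 t2).length + 1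

def pL (t1 t2 : TSym α) : ℕ :=
  match t2 with
  | Sum.inr false => 0
  | Sum.inl _ => (symL t1).length + 1
  | Sum.inr true => (gw t1 t2).length + 1

lemma tape_gw_U (t1 t2 : TSym α) : tape (gw t1 t2) (pU t1 t2) = t1 := by
  rcases t1 with a | b
  · have h : (1 : ℕ) - 1 < (gw (Sum.inl a) t2).length := by simp [gw, symL]
    rw [show pU (Sum.inl a) t2 = 1 from rfl, tape_mid _ 1 one_ne_zero h]
    simp [gw, symL]
  · cases b
    · exact tape_zero _
    · exact tape_large _ _ le_rfl

lemma tape_gw_L (t1 t2 : TSym α) : tape (gw t1 t2) (pL t1 t2) = t2 := by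
  rcases t2 with a | b
  · have h : (symL t1).length + 1 - 1 < (gw t1 (Sum.inl a)).length := by
      simp [gw, symL]
    rw [show pL t1 (Sum.inl a) = (symL t1).length + 1 from rfl,
      tape_mid _ _ (by omega) h]
    have : (symL t1).length + 1 - 1 = (symL t1).length := by omega
    simp only [this, gw]
    rw [List.getElem_append_right (le_refl (symL t1).length)]
    simp [symL]
  · cases b
    · exact tape_zero _
    · exact tape_large _ _ le_rfl

lemma pL_pos (t1 t2 : TSym α) (h : t2 ≠ Sum.inr false) : 1 ≤ pL t1 t2 := by
  rcases t2 with a | b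
  · simp [pL]
  · cases b
    · exact absurd rfl h
    · simp [pL]

lemma isR_false_eS_ne {s : TSym α} (h : isR s = false) : eS s ≠ Sum.inr false := by
  rcases s with a | b
  · simp [eS]
  · cases b
    · simp [eS]
    · simp [isR] at h

lemma chain_inv {β : Type _} {R : β → β → Prop} {P : β → Prop}
    (hinv : ∀ a b, P a → R a b → P b) :
    ∀ (cs : List β) (c0 : β), cs.head? = some c0 → P c0 → List.Chain' R cs →
      ∀ c ∈ cs, P c := by
  intro cs
  induction cs with
  | nil => simp
  | cons a l ih =>
    intro c0 h hP hch c hc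
    obtain rfl : a = c0 := by simpa using h
    rcases List.mem_cons.mp hc with rfl | hc
    · exact hP
    · cases l with
      | nil => simp at hc
      | cons b l' =>
        simp only [List.Chain', List.isChain_cons_cons] at hch
        exact ih b rfl (hinv _ _ hP hch.1) hch.2 c hc

lemma chain'_map_P {β γ : Type _} {R : β → β → Prop} {S : γ → γ → Prop}
    {f : β → γ} {P : β → Prop}
    (hstep : ∀ a b, P a → R a b → S (f a) (f b)) :
    ∀ cs : List β, (∀ c ∈ cs, P c) → List.Chain' R cs → List.Chain' S (cs.map f) := by
  intro cs
  induction cs with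
  | nil => simp [List.Chain']
  | cons a l ih =>
    cases l with
    | nil => simp [List.Chain']
    | cons b l' =>
      intro hP hch
      simp only [List.Chain', List.isChain_cons_cons] at hch
      simp only [List.map_cons]
      simp only [List.Chain', List.isChain_cons_cons]
      refine ⟨hstep a b (hP a (by simp)) hch.1, ?_⟩
      have := ih (fun c hc => hP c (List.mem_cons_of_mem _ hc)) hch.2
      simpa [List.Chain'] using this

lemma accepts_map {A B : DPWK α} {v w : List α} (f : Config A → Config B)
    (P : Config A → Prop)
    (hinit : f (initConf A v) = initConf B w) (hPinit : P (initConf A v))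
    (hstep : ∀ c c', P c → Step A v c c' → Step B w (f c) (f c'))
    (hinv : ∀ c c', P c → Step A v c c' → P c')
    (hhalt : ∀ c, P c → Halted A v c → Halted B w (f c))
    (hacc : ∀ c, AccConf A c → AccConf B (f c)) :
    Accepts A v → Accepts B w := by
  rintro ⟨cs, h1, h2, cl, h3, h4, h5⟩
  have hP : ∀ c ∈ cs, P c :=
    chain_inv (fun a b ha hr => hinv a b ha hr) cs _ h1 hPinit h2
  refine ⟨cs.map f, ?_, ?_, f cl, ?_, ?_, ?_⟩
  · rw [List.head?_map, h1, Option.map_some, hinit]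
  · exact chain'_map_P (fun a b ha hr => hstep a b ha hr) cs hP h2
  · rw [List.getLast?_map, h3, Option.map_some]
  · have hcl : cl ∈ cs := by
      obtain ⟨hne, heq⟩ := List.mem_getLast?_eq_getLast (show cl ∈ cs.getLast? by simp [h3])
      rw [heq]; exact List.getLast_mem hne
    exact hhalt cl (hP cl hcl) h4
  · exact hacc cl h5

lemma tape_min_rel {v : List α} {bi ci : ℕ} (h : min bi (v.length + 1) = ci) :
    tape v bi = tape v ci := by
  rcases le_total bi (v.length + 1) with hb | hb
  · rw [min_eq_left hb] at h; rw [h]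
  · rw [min_eq_right hb] at h
    rw [tape_large v bi (by omega), tape_large v ci (by omega)]

lemma not_isR_lt {v : List α} {k : ℕ} (h : isR (tape v k) = false) : k < v.length + 1 := by
  by_contra hc
  rw [(isR_tape_iff v k).2 (by omega)] at h
  exact Bool.true_eq_false.mp h

lemma not_isL_pos {v : List α} {k : ℕ} (h : isL (tape v k) = false) : 0 < k := by
  by_contra hc
  rw [show k = 0 by omega, (isL_tape_iff v 0).2 rfl] at h
  exact Bool.true_eq_false.mp h

lemma accepts_to_nrm (A : DPWK α) (v : List α) :
    Accepts A v → Accepts (nrm A) v := by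
  apply accepts_map (A := A) (B := nrm A) (v := v) (w := v)
    (f := fun c => (⟨c.p, min c.i (v.length + 1), c.q, c.j⟩ : Config (nrm A)))
    (P := fun _ => True)
  · show (⟨A.q01, min 0 (v.length + 1), A.q02, v.length + 1⟩ : Config (nrm A))
      = initConf (nrm A) v
    rw [Nat.min_eq_left (Nat.zero_le _)]
    rfl
  · trivial
  · rintro c c' - ⟨d1, d2, h1, h2, h3, h4⟩
    refine ⟨!(isR (tape v c.i)) && d1, d2, ?_, ?_, ?_, ?_⟩
    · show gF (isR (tape v (min c.i (v.length + 1))))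
        (A.δ1 c.p (tape v (min c.i (v.length + 1))) (A.μ2 c.q (tape v c.j)))
        = some (c'.p, !(isR (tape v c.i)) && d1)
      rw [show tape v (min c.i (v.length + 1)) = tape v c.i from (tape_min_rel rfl).symm]
      rw [h1, gF_some]
    · show A.δ2 c.q (tape v c.j)
        (A.μ1 c.p (tape v (min c.i (v.length + 1)))) = some (c'.q, d2)
      rw [show tape v (min c.i (v.length + 1)) = tape v c.i from (tape_min_rel rfl).symm]
      exact h2
    · show min c'.i (v.length + 1) = min c.i (v.length + 1)
        + cond (!(isR (tape v c.i)) && d1) 1 0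
      by_cases hR : isR (tape v c.i) = true
      · have hge : v.length + 1 ≤ c.i := (isR_tape_iff v c.i).1 hR
        rw [hR]
        cases d1 <;> simp at h3 ⊢ <;> omega
      · rw [Bool.not_eq_true] at hR
        have hlt : c.i < v.length + 1 := not_isR_lt hR
        rw [hR]
        cases d1 <;> simp at h3 ⊢ <;> omega
    · exact h4
  · intro c c' _ _; trivial
  · rintro c - hH ⟨c2, d1, d2, h1, h2, h3, h4⟩
    apply hH
    have h1' : gF (isR (tape v (min c.i (v.length + 1))))
        (A.δ1 c.p (tape v (min c.i (v.length + 1))) (A.μ2 c.q (tape v c.j)))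
        = some (c2.p, d1) := h1
    rw [show tape v (min c.i (v.length + 1)) = tape v c.i from (tape_min_rel rfl).symm]
      at h1'
    obtain ⟨g, hg, -⟩ := gF_eq_some.mp h1'
    have h2' : A.δ2 c.q (tape v c.j)
        (A.μ1 c.p (tape v (min c.i (v.length + 1)))) = some (c2.q, d2) := h2
    rw [show tape v (min c.i (v.length + 1)) = tape v c.i from (tape_min_rel rfl).symm]
      at h2'
    exact ⟨⟨c2.p, c.i + cond g 1 0, c2.q, c2.j⟩, g, d2, hg, h2', rfl, h4⟩
  · intro c h; exact h

lemma accepts_of_nrm (A : DPWK α) (v : List α) :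
    Accepts (nrm A) v → Accepts A v := by
  rintro ⟨cs, h1, h2, cl, h3, h4, h5⟩
  have key : ∀ (cs : List (Config (nrm A))) (c0 : Config (nrm A)),
      cs.head? = some c0 → List.Chain' (Step (nrm A) v) cs →
      (∀ cl', cs.getLast? = some cl' → Halted (nrm A) v cl' ∧ AccConf (nrm A) cl') →
      ∀ b0 : Config A, b0.p = c0.p → b0.q = c0.q → b0.j = c0.j →
        min b0.i (v.length + 1) = c0.i →
        ∃ bs : List (Config A), bs.head? = some b0 ∧ List.Chain' (Step A v) bs ∧
          ∃ bl, bs.getLast? = some bl ∧ Halted A v bl ∧ AccConf A bl := by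
    intro cs
    induction cs with
    | nil => intro c0 h; simp at h
    | cons c rest ih =>
      intro c0 hh hch hla b0 e1 e2 e3 e4
      obtain rfl : c = c0 := by simpa using hh
      have htape : tape v b0.i = tape v c.i := tape_min_rel e4
      cases rest with
      | nil =>
        obtain ⟨hH, hA⟩ := hla c rfl
        refine ⟨[b0], rfl, by simp [List.Chain'], b0, rfl, ?_, ?_⟩
        · rintro ⟨b2, d1, d2, g1, g2, g3, g4⟩
          apply hH
          refine ⟨⟨b2.p, c.i + cond (!(isR (tape v c.i)) && d1) 1 0, b2.q, b2.j⟩,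
            !(isR (tape v c.i)) && d1, d2, ?_, ?_, rfl, ?_⟩
          · show gF (isR (tape v c.i))
              (A.δ1 c.p (tape v c.i) (A.μ2 c.q (tape v c.j))) = _
            rw [← e1, ← e2, ← e3, ← htape, g1, gF_some]
            rfl
          · show A.δ2 c.q (tape v c.j) (A.μ1 c.p (tape v c.i)) = _
            rw [← e1, ← e2, ← e3, ← htape, g2]
            rfl
          · show c.j = b2.j + cond d2 1 0
            rw [← e3, g4]
        · rcases hA with h | h
          · exact Or.inl (by rw [e1]; exact h)
          · exact Or.inr (by rw [e2]; exact h)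
      | cons c' rest' =>
        simp only [List.Chain', List.isChain_cons_cons] at hch
        obtain ⟨hstep, hch'⟩ := hch
        obtain ⟨d1, d2, g1, g2, g3, g4⟩ := hstep
        have g1' : gF (isR (tape v c.i))
            (A.δ1 c.p (tape v c.i) (A.μ2 c.q (tape v c.j))) = some (c'.p, d1) := g1
        obtain ⟨g, hg, hd1⟩ := gF_eq_some.mp g1'
        have hstepA : Step A v b0 ⟨c'.p, b0.i + cond g 1 0, c'.q, c'.j⟩ := by
          refine ⟨g, d2, ?_, ?_, rfl, ?_⟩
          · show A.δ1 b0.p (tape v b0.i) (A.μ2 b0.q (tape v b0.j)) = some (c'.p, g)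
            rw [e1, e2, e3, htape]; exact hg
          · show A.δ2 b0.q (tape v b0.j) (A.μ1 b0.p (tape v b0.i)) = some (c'.q, d2)
            rw [e1, e2, e3, htape]; exact g2
          · show b0.j = c'.j + cond d2 1 0
            rw [e3]; exact g4
        have hrel4 : min (b0.i + cond g 1 0) (v.length + 1) = c'.i := by
          rw [g3, hd1]
          by_cases hR : isR (tape v c.i) = true
          · have hge : v.length + 1 ≤ c.i := (isR_tape_iff v c.i).1 hR
            have hb : v.length + 1 ≤ b0.i := by
              rcases le_total b0.i (v.length + 1) with hb | hb
              · rw [min_eq_left hb] at e4; omega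
              · exact hb
            have hc : c.i = v.length + 1 := by
              rcases le_total b0.i (v.length + 1) with hb' | hb'
              · rw [min_eq_left hb'] at e4; omega
              · rw [min_eq_right hb'] at e4; omega
            rw [hR]
            cases g <;> simp <;> omega
          · rw [Bool.not_eq_true] at hR
            have hlt : c.i < v.length + 1 := not_isR_lt hR
            have hb : b0.i = c.i := by
              rcases le_total b0.i (v.length + 1) with hb' | hb'
              · rw [min_eq_left hb'] at e4; omega
              · rw [min_eq_right hb'] at e4; omega
            rw [hR]
            cases g <;> simp <;> omega
        obtain ⟨bs, hb1, hb2, bl, hb3, hb4, hb5⟩ :=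
          ih c' rfl hch' (fun cl' hcl' => hla cl' (by rw [List.getLast?_cons_cons]; exact hcl'))
            ⟨c'.p, b0.i + cond g 1 0, c'.q, c'.j⟩ rfl rfl rfl hrel4
        cases bs with
        | nil => simp at hb1
        | cons b1 bs' =>
          have hb1' : b1 = ⟨c'.p, b0.i + cond g 1 0, c'.q, c'.j⟩ := by simpa using hb1
          refine ⟨b0 :: b1 :: bs', rfl, ?_, bl, ?_, hb4, hb5⟩
          · simp only [List.Chain', List.isChain_cons_cons]
            refine ⟨?_, hb2⟩
            rw [hb1']
            exact hstepA
          · rw [List.getLast?_cons_cons]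
            exact hb3
  exact key cs (initConf (nrm A) v) h1 h2
    (fun cl' hcl' => by rw [h3] at hcl'; obtain rfl := Option.some.inj hcl'; exact ⟨h4, h5⟩)
    (initConf A v) rfl rfl rfl (by
      show min 0 (v.length + 1) = 0
      exact Nat.min_eq_left (Nat.zero_le _))

lemma isR_false_of_lt {w : List α} {k : ℕ} (h : k < w.length + 1) :
    isR (tape w k) = false := by
  cases hR : isR (tape w k)
  · rfl
  · exact absurd ((isR_tape_iff w k).1 hR) (by omega)

lemma isL_false_of_pos {w : List α} {k : ℕ} (h : 0 < k) :
    isL (tape w k) = false := by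
  cases hL : isL (tape w k)
  · rfl
  · exact absurd ((isL_tape_iff w k).1 hL) (by omega)

lemma cond_arith1 {n ci ci' : ℕ} {b : Bool} (h : ci' = ci + cond b 1 0)
    (hb : b = true → ci < n) (hci : ci ≤ n) :
    n - ci = n - ci' + cond b 1 0 := by
  cases b
  · simp at h ⊢; omega
  · have h' := hb rfl; simp at h ⊢; omega

lemma cond_arith2 {n cj cj' : ℕ} {b : Bool} (h : cj = cj' + cond b 1 0) (hcj : cj ≤ n) :
    n - cj' = n - cj + cond b 1 0 := by
  cases b <;> simp at h ⊢ <;> omega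

lemma cond_bound {n ci ci' : ℕ} {b : Bool} (h : ci' = ci + cond b 1 0)
    (hb : b = true → ci < n) (hci : ci ≤ n) : ci' ≤ n := by
  cases b
  · simp at h; omega
  · have h' := hb rfl; simp at h; omega

lemma cond_le {cj cj' : ℕ} {b : Bool} (h : cj = cj' + cond b 1 0) : cj' ≤ cj := by
  cases b <;> simp at h <;> omega

lemma bool_aux {x g : Bool} (h : (!x && g) = true) : x = false := by
  cases x <;> simp at h ⊢

lemma bool_aux2 {x g : Bool} (h : (x && g) = false) (hg : g = true) : x = false := by
  cases x <;> simp_all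

lemma accepts_nrm_to_mir (A : DPWK α) (w : List α) :
    Accepts (nrm A) w.reverse → Accepts (mir A) w := by
  have hlen : w.reverse.length = w.length := List.length_reverse
  apply accepts_map (A := nrm A) (B := mir A) (v := w.reverse) (w := w)
    (f := fun c => (⟨c.q, w.length + 1 - c.j, c.p, w.length + 1 - c.i⟩ : Config (mir A)))
    (P := fun c => c.i ≤ w.length + 1 ∧ c.j ≤ w.length + 1)
  · show (⟨A.q02, w.length + 1 - (w.reverse.length + 1), A.q01, w.length + 1 - 0⟩ :
      Config (mir A)) = initConf (mir A) w
    rw [hlen, Nat.sub_self, Nat.sub_zero]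
    rfl
  · constructor <;> simp [initConf, hlen]
  · rintro c c' ⟨hPi, hPj⟩ ⟨d1, d2, h1, h2, h3, h4⟩
    have h1' : gF (isR (tape w.reverse c.i))
        (A.δ1 c.p (tape w.reverse c.i) (A.μ2 c.q (tape w.reverse c.j)))
        = some (c'.p, d1) := h1
    have h2' : A.δ2 c.q (tape w.reverse c.j) (A.μ1 c.p (tape w.reverse c.i))
        = some (c'.q, d2) := h2
    have E1 : tape w (w.length + 1 - c.j) = eS (tape w.reverse c.j) := tape_rev' w c.j
    have E2 : tape w (w.length + 1 - c.i) = eS (tape w.reverse c.i) := tape_rev' w c.i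
    obtain ⟨g, hg, hd1⟩ := gF_eq_some.mp h1'
    refine ⟨d2, d1, ?_, ?_, ?_, ?_⟩
    · show gN (isR (tape w (w.length + 1 - c.j)))
        (A.δ2 c.q (eS (tape w (w.length + 1 - c.j)))
          (A.μ1 c.p (eS (tape w (w.length + 1 - c.i))))) = some (c'.q, d2)
      rw [E1, E2, eS_eS, eS_eS, isR_eS, h2']
      apply gN_some
      cases d2 with
      | false => simp
      | true =>
        simp only [Bool.and_true]
        apply isL_false_of_pos
        simp at h4; omega
    · show gF (isL (tape w (w.length + 1 - c.i)))
        (A.δ1 c.p (eS (tape w (w.length + 1 - c.i)))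
          (A.μ2 c.q (eS (tape w (w.length + 1 - c.j))))) = some (c'.p, d1)
      rw [E1, E2, eS_eS, eS_eS, isL_eS]
      exact h1'
    · show w.length + 1 - c'.j = w.length + 1 - c.j + cond d2 1 0
      exact cond_arith2 h4 hPj
    · show w.length + 1 - c.i = w.length + 1 - c'.i + cond d1 1 0
      subst hd1
      refine cond_arith1 h3 (fun hbt => ?_) hPi
      have hR : isR (tape w.reverse c.i) = false := bool_aux hbt
      have := not_isR_lt hR
      omega
  · rintro c c' ⟨hPi, hPj⟩ ⟨d1, d2, h1, h2, h3, h4⟩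
    have h1' : gF (isR (tape w.reverse c.i))
        (A.δ1 c.p (tape w.reverse c.i) (A.μ2 c.q (tape w.reverse c.j)))
        = some (c'.p, d1) := h1
    obtain ⟨g, hg, hd1⟩ := gF_eq_some.mp h1'
    subst hd1
    refine ⟨cond_bound h3 (fun hbt => ?_) hPi, le_trans (cond_le h4) hPj⟩
    have hR : isR (tape w.reverse c.i) = false := bool_aux hbt
    have := not_isR_lt hR
    omega
  · rintro c ⟨hPi, hPj⟩ hH ⟨c2, d1, d2, k1, k2, k3, k4⟩
    apply hH
    have E1 : tape w (w.length + 1 - c.j) = eS (tape w.reverse c.j) := tape_rev' w c.j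
    have E2 : tape w (w.length + 1 - c.i) = eS (tape w.reverse c.i) := tape_rev' w c.i
    have k1' : gN (isR (tape w (w.length + 1 - c.j)))
        (A.δ2 c.q (eS (tape w (w.length + 1 - c.j)))
          (A.μ1 c.p (eS (tape w (w.length + 1 - c.i))))) = some (c2.p, d1) := k1
    rw [E1, E2, eS_eS, eS_eS, isR_eS] at k1'
    obtain ⟨hδ2, hguard⟩ := gN_eq_some.mp k1'
    have k2' : gF (isL (tape w (w.length + 1 - c.i)))
        (A.δ1 c.p (eS (tape w (w.length + 1 - c.i)))
          (A.μ2 c.q (eS (tape w (w.length + 1 - c.j))))) = some (c2.q, d2) := k2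
    rw [E1, E2, eS_eS, eS_eS, isL_eS] at k2'
    refine ⟨⟨c2.q, c.i + cond d2 1 0, c2.p, c.j - cond d1 1 0⟩, d2, d1, ?_, ?_, rfl, ?_⟩
    · exact k2'
    · exact hδ2
    · show c.j = c.j - cond d1 1 0 + cond d1 1 0
      cases d1 with
      | false => simp
      | true =>
        have hL : isL (tape w.reverse c.j) = false := bool_aux2 hguard rfl
        have := not_isL_pos hL
        simp; omega
  · intro c h
    exact Or.symm h

lemma accepts_mir_to_nrm (A : DPWK α) (w : List α) :
    Accepts (mir A) w → Accepts (nrm A) w.reverse := by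
  have hlen : w.reverse.length = w.length := List.length_reverse
  apply accepts_map (A := mir A) (B := nrm A) (v := w) (w := w.reverse)
    (f := fun c => (⟨c.q, w.length + 1 - c.j, c.p, w.length + 1 - c.i⟩ : Config (nrm A)))
    (P := fun c => c.i ≤ w.length + 1 ∧ c.j ≤ w.length + 1)
  · show (⟨A.q01, w.length + 1 - (w.length + 1), A.q02, w.length + 1 - 0⟩ :
      Config (nrm A)) = initConf (nrm A) w.reverse
    rw [Nat.sub_self, Nat.sub_zero, show w.length = w.reverse.length from hlen.symm]
    rfl
  · constructor <;> simp [initConf]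
  · rintro c c' ⟨hPi, hPj⟩ ⟨d1, d2, h1, h2, h3, h4⟩
    have h1' : gN (isR (tape w c.i))
        (A.δ2 c.p (eS (tape w c.i)) (A.μ1 c.q (eS (tape w c.j))))
        = some (c'.p, d1) := h1
    have h2' : gF (isL (tape w c.j))
        (A.δ1 c.q (eS (tape w c.j)) (A.μ2 c.p (eS (tape w c.i))))
        = some (c'.q, d2) := h2
    obtain ⟨hδ2, hguard⟩ := gN_eq_some.mp h1'
    have E1 : tape w.reverse (w.length + 1 - c.j) = eS (tape w c.j) :=
      tape_rev'' w c.j hPj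
    have E2 : tape w.reverse (w.length + 1 - c.i) = eS (tape w c.i) :=
      tape_rev'' w c.i hPi
    refine ⟨d2, d1, ?_, ?_, ?_, ?_⟩
    · show gF (isR (tape w.reverse (w.length + 1 - c.j)))
        (A.δ1 c.q (tape w.reverse (w.length + 1 - c.j))
          (A.μ2 c.p (tape w.reverse (w.length + 1 - c.i)))) = some (c'.q, d2)
      rw [E1, E2, isR_eS]
      exact h2'
    · show A.δ2 c.p (tape w.reverse (w.length + 1 - c.i))
        (A.μ1 c.q (tape w.reverse (w.length + 1 - c.j))) = some (c'.p, d1)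
      rw [E1, E2]
      exact hδ2
    · show w.length + 1 - c'.j = w.length + 1 - c.j + cond d2 1 0
      exact cond_arith2 h4 hPj
    · show w.length + 1 - c.i = w.length + 1 - c'.i + cond d1 1 0
      refine cond_arith1 h3 (fun hbt => ?_) hPi
      have hR : isR (tape w c.i) = false := bool_aux2 hguard hbt
      exact not_isR_lt hR
  · rintro c c' ⟨hPi, hPj⟩ ⟨d1, d2, h1, h2, h3, h4⟩
    have h1' : gN (isR (tape w c.i))
        (A.δ2 c.p (eS (tape w c.i)) (A.μ1 c.q (eS (tape w c.j))))
        = some (c'.p, d1) := h1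
    obtain ⟨hδ2, hguard⟩ := gN_eq_some.mp h1'
    refine ⟨cond_bound h3 (fun hbt => ?_) hPi, le_trans (cond_le h4) hPj⟩
    have hR : isR (tape w c.i) = false := bool_aux2 hguard hbt
    exact not_isR_lt hR
  · rintro c ⟨hPi, hPj⟩ hH ⟨c2, d1, d2, k1, k2, k3, k4⟩
    apply hH
    have E1 : tape w.reverse (w.length + 1 - c.j) = eS (tape w c.j) :=
      tape_rev'' w c.j hPj
    have E2 : tape w.reverse (w.length + 1 - c.i) = eS (tape w c.i) :=
      tape_rev'' w c.i hPi
    have k1' : gF (isR (tape w.reverse (w.length + 1 - c.j)))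
        (A.δ1 c.q (tape w.reverse (w.length + 1 - c.j))
          (A.μ2 c.p (tape w.reverse (w.length + 1 - c.i)))) = some (c2.p, d1) := k1
    rw [E1, E2, isR_eS] at k1'
    have k2' : A.δ2 c.p (tape w.reverse (w.length + 1 - c.i))
        (A.μ1 c.q (tape w.reverse (w.length + 1 - c.j))) = some (c2.q, d2) := k2
    rw [E1, E2] at k2'
    have k4' : w.length + 1 - c.i = c2.j + cond d2 1 0 := k4
    obtain ⟨g, hg, hd1⟩ := gF_eq_some.mp k1'
    refine ⟨⟨c2.q, c.i + cond d2 1 0, c2.p, c.j - cond d1 1 0⟩, d2, d1, ?_, ?_, rfl, ?_⟩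
    · show gN (isR (tape w c.i))
        (A.δ2 c.p (eS (tape w c.i)) (A.μ1 c.q (eS (tape w c.j)))) = some (c2.q, d2)
      rw [k2']
      apply gN_some
      cases d2 with
      | false => simp
      | true =>
        simp only [Bool.and_true]
        apply isR_false_of_lt
        simp at k4'; omega
    · show gF (isL (tape w c.j))
        (A.δ1 c.q (eS (tape w c.j)) (A.μ2 c.p (eS (tape w c.i)))) = some (c2.p, d1)
      exact k1'
    · show c.j = c.j - cond d1 1 0 + cond d1 1 0
      subst hd1
      cases hL : isL (tape w c.j) with
      | true => simp
      | false =>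
        have := not_isL_pos hL
        cases g <;> simp <;> omega
  · intro c h
    exact Or.symm h

lemma cond_add_cancel {a : ℕ} {x y : Bool} (h : a + cond x 1 0 = a + cond y 1 0) :
    x = y := by
  cases x <;> cases y
  · rfl
  · exfalso; simp at h
  · exfalso; simp at h
  · rfl

lemma cond_sub_cancel {a : ℕ} {x y : Bool} (hge : cond x 1 0 ≤ a)
    (h : a = a - cond x 1 0 + cond y 1 0) : y = x := by
  cases x <;> cases y
  · rfl
  · exfalso; simp at h
  · exfalso; simp at h hge; omega
  · rfl

lemma pL_ge_cond {t1 s1 : TSym α} {f : Bool} (hguard : (isR s1 && f) = false) :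
    cond f 1 0 ≤ pL t1 (eS s1) := by
  cases f
  · simp
  · have hR : isR s1 = false := bool_aux2 hguard rfl
    simpa using pL_pos t1 (eS s1) (isR_false_eS_ne hR)

/-- Reversibility witness for the mirrored machine. -/
def mirWit (A : DPWK α) (W : RevWitness A) : RevWitness (mir A) where
  δ'1 := fun q s m => gN (isR s) (W.δ'2 q (eS s) m)
  δ'2 := fun p s m => gF (isL s) (W.δ'1 p (eS s) m)
  μ'1 := fun q s => W.μ'2 q (eS s)
  μ'2 := fun p s => W.μ'1 p (eS s)
  inverse := by
    intro w c c'
    constructor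
    · rintro ⟨f1, f2, h1, h2, h3, h4⟩
      have h1' : gN (isR (tape w c.i))
          (W.δ'2 c'.p (eS (tape w c.i)) (W.μ'1 c'.q (eS (tape w c.j))))
          = some (c.p, f1) := h1
      have h2' : gF (isL (tape w c.j))
          (W.δ'1 c'.q (eS (tape w c.j)) (W.μ'2 c'.p (eS (tape w c.i))))
          = some (c.q, f2) := h2
      obtain ⟨hb2, hguard⟩ := gN_eq_some.mp h1'
      obtain ⟨g, hbg, hf2⟩ := gF_eq_some.mp h2'
      have hge : cond f1 1 0 ≤ pL (eS (tape w c.j)) (eS (tape w c.i)) :=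
        pL_ge_cond hguard
      have hBS : BackStep A W.δ'1 W.δ'2 W.μ'1 W.μ'2
          (gw (eS (tape w c.j)) (eS (tape w c.i)))
          ⟨c'.q, pU (eS (tape w c.j)) (eS (tape w c.i)) + cond g 1 0, c'.p,
            pL (eS (tape w c.j)) (eS (tape w c.i)) - cond f1 1 0⟩
          ⟨c.q, pU (eS (tape w c.j)) (eS (tape w c.i)), c.p,
            pL (eS (tape w c.j)) (eS (tape w c.i))⟩ := by
        refine ⟨g, f1, ?_, ?_, rfl, ?_⟩
        · show W.δ'1 c'.q (tape _ (pU _ _)) (W.μ'2 c'.p (tape _ (pL _ _))) = some (c.q, g)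
          rw [tape_gw_U, tape_gw_L]; exact hbg
        · show W.δ'2 c'.p (tape _ (pL _ _)) (W.μ'1 c'.q (tape _ (pU _ _))) = some (c.p, f1)
          rw [tape_gw_U, tape_gw_L]; exact hb2
        · show pL _ _ = pL _ _ - cond f1 1 0 + cond f1 1 0
          omega
      obtain ⟨d1, d2, g1, g2, g3, g4⟩ := (W.inverse _ _ _).mp hBS
      rw [tape_gw_U, tape_gw_L] at g1 g2
      obtain rfl : g = d1 := cond_add_cancel g3
      obtain rfl : f1 = d2 := (cond_sub_cancel hge g4).symm
      refine ⟨f1, f2, ?_, ?_, h3, h4⟩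
      · show gN (isR (tape w c.i))
          (A.δ2 c.p (eS (tape w c.i)) (A.μ1 c.q (eS (tape w c.j)))) = some (c'.p, f1)
        rw [g2]
        exact gN_some _ hguard
      · show gF (isL (tape w c.j))
          (A.δ1 c.q (eS (tape w c.j)) (A.μ2 c.p (eS (tape w c.i)))) = some (c'.q, f2)
        rw [hf2, g1, gF_some]
        rfl
    · rintro ⟨d1, d2, h1, h2, h3, h4⟩
      have h1' : gN (isR (tape w c.i))
          (A.δ2 c.p (eS (tape w c.i)) (A.μ1 c.q (eS (tape w c.j))))
          = some (c'.p, d1) := h1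
      have h2' : gF (isL (tape w c.j))
          (A.δ1 c.q (eS (tape w c.j)) (A.μ2 c.p (eS (tape w c.i))))
          = some (c'.q, d2) := h2
      obtain ⟨hb2, hguard⟩ := gN_eq_some.mp h1'
      obtain ⟨g, hbg, hd2⟩ := gF_eq_some.mp h2'
      have hge : cond d1 1 0 ≤ pL (eS (tape w c.j)) (eS (tape w c.i)) :=
        pL_ge_cond hguard
      have hS : Step A (gw (eS (tape w c.j)) (eS (tape w c.i)))
          ⟨c.q, pU (eS (tape w c.j)) (eS (tape w c.i)), c.p,
            pL (eS (tape w c.j)) (eS (tape w c.i))⟩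
          ⟨c'.q, pU (eS (tape w c.j)) (eS (tape w c.i)) + cond g 1 0, c'.p,
            pL (eS (tape w c.j)) (eS (tape w c.i)) - cond d1 1 0⟩ := by
        refine ⟨g, d1, ?_, ?_, rfl, ?_⟩
        · show A.δ1 c.q (tape _ (pU _ _)) (A.μ2 c.p (tape _ (pL _ _))) = some (c'.q, g)
          rw [tape_gw_U, tape_gw_L]; exact hbg
        · show A.δ2 c.p (tape _ (pL _ _)) (A.μ1 c.q (tape _ (pU _ _))) = some (c'.p, d1)
          rw [tape_gw_U, tape_gw_L]; exact hb2
        · show pL _ _ = pL _ _ - cond d1 1 0 + cond d1 1 0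
          omega
      obtain ⟨e1, e2, g1, g2, g3, g4⟩ := (W.inverse _ _ _).mpr hS
      rw [tape_gw_U, tape_gw_L] at g1 g2
      obtain rfl : g = e1 := cond_add_cancel g3
      obtain rfl : d1 = e2 := cond_sub_cancel hge g4 |>.symm
      refine ⟨d1, d2, ?_, ?_, h3, h4⟩
      · show gN (isR (tape w c.i))
          (W.δ'2 c'.p (eS (tape w c.i)) (W.μ'1 c'.q (eS (tape w c.j)))) = some (c.p, d1)
        rw [g2]
        exact gN_some _ hguard
      · show gF (isL (tape w c.j))
          (W.δ'1 c'.q (eS (tape w c.j)) (W.μ'2 c'.p (eS (tape w c.i)))) = some (c.q, d2)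
        rw [hd2, g1, gF_some]
        rfl
end WK

open WK in
/-- The family of languages accepted by reversible deterministic
two-party Watson-Crick systems is closed under reversal. -/
theorem REV_PWK_closed_reversal (α : Type) [Fintype α] (L : Set (List α)) :
    L ∈ RevPWKLangs α → (List.reverse '' L) ∈ RevPWKLangs α := by
  rintro ⟨A, ⟨W⟩, rfl⟩
  refine ⟨mir A, ⟨mirWit A W⟩, ?_⟩
  ext w
  constructor
  · intro hw
    exact ⟨w.reverse, accepts_of_nrm A w.reverse (accepts_mir_to_nrm A w hw),
      List.reverse_reverse w⟩
  · rintro ⟨v, hv, rfl⟩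
    apply accepts_nrm_to_mir A v.reverse
    rw [List.reverse_reverse]
    exact accepts_to_nrm A v hv
end
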